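/- arXiv:2306.16946 — 9 statements merged into one kernel-verified Lean document; each statement's English description precedes it below -/
import Mathlib

section
/- Let ρ: W → GL(V) be an n-dimensional representation of a group W, and let s₁, …, s_k ∈ W be such that each s_i acts on V as a generalized reflection with reflection vector α_i of eigenvalue λ_i. Suppose α₁, …, α_k are linearly independent. Then for every 0 ≤ d < k, the intersection ⋂_{1 ≤ i ≤ k} V_{d,s_i}^− is the zero subspace of ⋀^d V. -/
open Module ExteriorAlgebra

variable {F : Type*} [Field F] {V : Type*} [AddCommGroup V] [Module F V]
  {V₂ : Type*} [AddCommGroup V₂] [Module F V₂]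

/-- A (generalized) reflection: a diagonalizable endomorphism `s` with
`rank (s - id) = 1`. -/
def IsReflection (s : V →ₗ[F] V) : Prop :=
  (⨆ μ : F, Module.End.eigenspace s μ) = ⊤ ∧
    Module.finrank F (LinearMap.range (s - LinearMap.id)) = 1

theorem extPower_map_mem (d : ℕ) (f : V →ₗ[F] V₂) {x : ExteriorAlgebra F V}
    (hx : x ∈ ⋀[F]^d V) : ExteriorAlgebra.map f x ∈ ⋀[F]^d V₂ := by
  have h : Submodule.map (ExteriorAlgebra.map f).toLinearMap (⋀[F]^d V) ≤ ⋀[F]^d V₂ := by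
    rw [exteriorPower, Submodule.map_pow, ι_range_map_map]
    have h1 : Submodule.map (ι F (M := V₂)) (LinearMap.range f)
        ≤ LinearMap.range (ι F (M := V₂)) := by
      rintro - ⟨y, -, rfl⟩
      exact ⟨y, rfl⟩
    exact pow_le_pow_left' h1 d
  exact h ⟨x, hx, rfl⟩

/-- The linear map induced on `d`-th exterior powers by a linear map; for the inclusion
`H.subtype` of a subspace `H ⊆ V` this realizes `⋀^d H` as a subspace of `⋀^d V`
(via its range). -/
noncomputable def extMap (d : ℕ) (f : V →ₗ[F] V₂) : (⋀[F]^d V) →ₗ[F] (⋀[F]^d V₂) :=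
  (ExteriorAlgebra.map f).toLinearMap.restrict (fun _ hx => extPower_map_mem d f hx)

@[simp] theorem extMap_apply_coe (d : ℕ) (f : V →ₗ[F] V₂) (x : ⋀[F]^d V) :
    (extMap d f x : ExteriorAlgebra F V₂) = ExteriorAlgebra.map f x := rfl

variable {W : Type*} [Group W]

/-- The representation of `W` on the `d`-th exterior power `⋀^d V` induced by a
representation of `W` on `V`, given by `w · (v₁ ∧ ⋯ ∧ v_d) = (w·v₁) ∧ ⋯ ∧ (w·v_d)`. -/
noncomputable def extRep (ρ : Representation F W V) (d : ℕ) :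
    Representation F W (⋀[F]^d V) where
  toFun w := extMap d (ρ w)
  map_one' := by
    apply LinearMap.ext
    intro x
    apply Subtype.ext
    simp only [extMap_apply_coe, map_one]
    show (ExteriorAlgebra.map (LinearMap.id) : _) _ = _
    rw [ExteriorAlgebra.map_id]
    rfl
  map_mul' a b := by
    apply LinearMap.ext
    intro x
    apply Subtype.ext
    simp only [extMap_apply_coe, map_mul]
    show (ExteriorAlgebra.map (ρ a ∘ₗ ρ b) : _) _ = _
    rw [← ExteriorAlgebra.map_comp_map]
    rfl

/-- Irreducibility (simplicity) of a representation: the space is nonzero and the only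
invariant subspaces are `⊥` and `⊤`. -/
def Representation.IsIrreducible' (ρ : Representation F W V) : Prop :=
  Nontrivial V ∧
    ∀ U : Submodule F V, (∀ w : W, ∀ v ∈ U, ρ w v ∈ U) → U = ⊥ ∨ U = ⊤

/-- Isomorphism of two representations of `W`: an equivariant linear equivalence. -/
def Representation.Iso {F W : Type*} [CommSemiring F] [Monoid W]
    {V₁ V₂ : Type*} [AddCommMonoid V₁] [Module F V₁] [AddCommMonoid V₂] [Module F V₂]
    (ρ₁ : Representation F W V₁) (ρ₂ : Representation F W V₂) : Prop :=
  ∃ e : V₁ ≃ₗ[F] V₂, ∀ (w : W) (v : V₁), e (ρ₁ w v) = ρ₂ w (e v)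

/-- The wedge product `v 0 ∧ v 1 ∧ ⋯ ∧ v (d-1)` as an element of `⋀^d V`. -/
noncomputable def wedge (d : ℕ) (v : Fin d → V) : ⋀[F]^d V :=
  ⟨ExteriorAlgebra.ιMulti F d v, ExteriorAlgebra.ιMulti_range F d ⟨v, rfl⟩⟩

/-!
A reflection `s` with reflection vector `a` has the form `v ↦ v + φ v • a` for a linear form `φ`,
so it acts on the exterior algebra as `x ↦ x + a ∧ (φ ⌟ x)`. Hence an eigenvector of `⋀ s` with
eigenvalue `λ ≠ 1` satisfies `(λ - 1) • (a ∧ x) = a ∧ a ∧ (φ ⌟ x) = 0`, i.e. `a ∧ x = 0`.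

It remains to see that `x ∈ ⋀^d V` with `αᵢ ∧ x = 0` for `k > d` linearly independent `αᵢ`
vanishes. Choose `φ` with `φ α₀ = 1` and `φ αᵢ = 0` for `i > 0`. Contracting `αᵢ ∧ x = 0` with `φ`
gives `x = α₀ ∧ (φ ⌟ x)` and `αᵢ ∧ (φ ⌟ x) = 0` for `i > 0`; since `φ ⌟ x ∈ ⋀^(d-1) V`, induction
on `k` gives `φ ⌟ x = 0`, hence `x = 0`.
-/

open CliffordAlgebra (contractLeft contractLeft_ι_mul contractLeft_algebraMap)

section CommRing

variable {R M : Type*} [CommRing R] [AddCommGroup M] [Module R M]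

theorem ι_mul_mem_exteriorPower (m : M) {n : ℕ} {x : ExteriorAlgebra R M} (hx : x ∈ ⋀[R]^n M) :
    ι R m * x ∈ ⋀[R]^(n + 1) M := by
  rw [exteriorPower, pow_succ']
  exact Submodule.mul_mem_mul (LinearMap.mem_range_self _ m) hx

theorem contractLeft_eq_zero_of_mem_exteriorPower_zero (φ : Dual R M) {x : ExteriorAlgebra R M}
    (hx : x ∈ ⋀[R]^0 M) : contractLeft φ x = 0 := by
  obtain ⟨r, rfl⟩ := Submodule.mem_one.mp (by simpa using hx)
  exact contractLeft_algebraMap _ φ r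

theorem contractLeft_mem_exteriorPower (φ : Dual R M) :
    ∀ {n : ℕ} {x : ExteriorAlgebra R M}, x ∈ ⋀[R]^(n + 1) M → contractLeft φ x ∈ ⋀[R]^n M
  | n, x, hx => by
    rw [exteriorPower, pow_succ'] at hx
    induction hx using Submodule.mul_induction_on' with
    | mem_mul_mem m hm y hy =>
      obtain ⟨v, rfl⟩ := hm
      rw [contractLeft_ι_mul]
      refine sub_mem (Submodule.smul_mem _ _ hy) ?_
      cases n with
      | zero => simp [contractLeft_eq_zero_of_mem_exteriorPower_zero φ hy]
      | succ n => exact ι_mul_mem_exteriorPower v (contractLeft_mem_exteriorPower φ hy)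
    | add _ _ _ _ hx hy => simpa only [map_add] using add_mem hx hy

theorem ι_mul_contractLeft_of_ι_mul_eq_zero (φ : Dual R M) {a : M} {x : ExteriorAlgebra R M}
    (hx : ι R a * x = 0) : ι R a * contractLeft φ x = φ a • x := by
  have h := contractLeft_ι_mul φ a x
  rw [hx, map_zero, eq_comm, sub_eq_zero] at h
  exact h.symm

theorem map_eq_add_ι_mul_contractLeft {f : M →ₗ[R] M} {φ : Dual R M} {a : M}
    (hf : ∀ v, f v = v + φ v • a) (x : ExteriorAlgebra R M) :
    map f x = x + ι R a * contractLeft φ x := by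
  induction x using CliffordAlgebra.left_induction with
  | algebraMap r => simp
  | add x y hx hy => simp only [map_add, hx, hy, mul_add]; abel
  | ι_mul x v hx =>
    have hanti : ι R v * ι R a = -(ι R a * ι R v) :=
      eq_neg_of_add_eq_zero_left (ι_add_mul_swap v a)
    rw [map_mul, map_apply_ι, hf, hx, contractLeft_ι_mul]
    simp only [map_add, map_smul, add_mul, mul_add, smul_mul_assoc, mul_sub, mul_smul_comm,
      ← mul_assoc, ι_sq_zero, hanti, smul_zero, add_zero, neg_mul]
    abel

end CommRing

theorem LinearMap.exists_dual_forall_apply_eq_add_smul {f : V →ₗ[F] V}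
    (hf : finrank F (LinearMap.range (f - LinearMap.id)) = 1) {a : V}
    (ha : a ∈ LinearMap.range (f - LinearMap.id)) (ha₀ : a ≠ 0) :
    ∃ φ : Dual F V, ∀ v, f v = v + φ v • a := by
  set u := f - LinearMap.id
  have : FiniteDimensional F (range u) := Module.finite_of_finrank_pos (by omega)
  have hspan : F ∙ a = range u := Submodule.eq_of_le_of_finrank_le
    ((Submodule.span_singleton_le_iff_mem _ _).2 ha) (by rw [hf, finrank_span_singleton ha₀])
  let e := LinearEquiv.toSpanNonzeroSingleton F V a ha₀
  let ψ := u.codRestrict (F ∙ a) fun v => hspan ▸ mem_range_self u v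
  refine ⟨e.symm.toLinearMap ∘ₗ ψ, fun v => ?_⟩
  have h := congrArg Subtype.val (e.apply_symm_apply (ψ v))
  rw [LinearEquiv.toSpanNonzeroSingleton_apply] at h
  calc f v = v + u v := by simp [u]
    _ = _ := congrArg (v + ·) h.symm

theorem Submodule.exists_dual_eq_one_of_notMem {p : Submodule F V} {a : V} (ha : a ∉ p) :
    ∃ φ : Dual F V, φ a = 1 ∧ ∀ v ∈ p, φ v = 0 := by
  obtain ⟨φ, hφa, hφp⟩ := p.exists_dual_map_eq_bot_of_notMem ha inferInstance
  refine ⟨(φ a)⁻¹ • φ, inv_mul_cancel₀ hφa, fun v hv => ?_⟩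
  have hφv : φ v ∈ p.map φ := Submodule.mem_map_of_mem hv
  rw [hφp, Submodule.mem_bot] at hφv
  simp [hφv]

theorem ι_mul_eq_zero_of_map_eq_smul {f : V →ₗ[F] V} {φ : Dual F V} {a : V}
    (hf : ∀ v, f v = v + φ v • a) {μ : F} (hμ : μ ≠ 1) {x : ExteriorAlgebra F V}
    (hx : map f x = μ • x) : ι F a * x = 0 := by
  rw [map_eq_add_ι_mul_contractLeft hf] at hx
  have hc : ι F a * contractLeft φ x = (μ - 1) • x := by rw [sub_smul, one_smul, ← hx]; abel
  have h : (μ - 1) • (ι F a * x) = 0 := by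
    rw [← mul_smul_comm, ← hc, ← mul_assoc, ι_sq_zero, zero_mul]
  exact (smul_eq_zero.mp h).resolve_left (sub_ne_zero.mpr hμ)

theorem eq_zero_of_forall_ι_mul_eq_zero {d k : ℕ} (hdk : d < k) {α : Fin k → V}
    (hα : LinearIndependent F α) {x : ExteriorAlgebra F V} (hx : x ∈ ⋀[F]^d V)
    (hαx : ∀ i, ι F (α i) * x = 0) : x = 0 := by
  induction k generalizing d x with
  | zero => exact absurd hdk (Nat.not_lt_zero d)
  | succ k ih =>
    obtain ⟨hα_tail, hα₀⟩ := linearIndependent_finSucc.mp hα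
    obtain ⟨φ, hφ₀, hφ⟩ := Submodule.exists_dual_eq_one_of_notMem hα₀
    have hc : contractLeft φ x = 0 := by
      cases d with
      | zero => exact contractLeft_eq_zero_of_mem_exteriorPower_zero φ hx
      | succ d =>
        refine ih (Nat.lt_of_succ_lt_succ hdk) hα_tail (contractLeft_mem_exteriorPower φ hx)
          fun i => ?_
        rw [Fin.tail, ι_mul_contractLeft_of_ι_mul_eq_zero φ (hαx i.succ),
          hφ (α i.succ) (Submodule.subset_span ⟨i, rfl⟩), zero_smul]
    calc x = φ (α 0) • x := by rw [hφ₀, one_smul]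
      _ = ι F (α 0) * contractLeft φ x := (ι_mul_contractLeft_of_ι_mul_eq_zero φ (hαx 0)).symm
      _ = 0 := by rw [hc, mul_zero]

theorem iInf_eigenspace_eq_bot_of_lt_general
    (ρ : Representation F W V)
    {k : ℕ} (s : Fin k → W) (α : Fin k → V) (lam : Fin k → F)
    (hrefl : ∀ i, IsReflection (ρ (s i)))
    (hαmem : ∀ i, α i ∈ LinearMap.range (ρ (s i) - LinearMap.id))
    (hlam : ∀ i, lam i ≠ 1)
    (hli : LinearIndependent F α) :
    ∀ d : ℕ, d < k →
      (⨅ i : Fin k, Module.End.eigenspace ((extRep ρ d) (s i)) (lam i)) = ⊥ := by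
  intro d hdk
  refine (Submodule.eq_bot_iff _).2 fun x hx => Subtype.ext ?_
  refine eq_zero_of_forall_ι_mul_eq_zero hdk hli x.2 fun i => ?_
  obtain ⟨φ, hφ⟩ := LinearMap.exists_dual_forall_apply_eq_add_smul (hrefl i).2 (hαmem i)
    (hli.ne_zero i)
  have hx_eig := Module.End.mem_eigenspace_iff.mp ((Submodule.mem_iInf _).mp hx i)
  exact ι_mul_eq_zero_of_map_eq_smul hφ (hlam i) (congrArg Subtype.val hx_eig)

/-- Let `ρ : W → GL(V)` be an `n`-dimensional representation and let
`s 1, …, s k ∈ W` act on `V` as generalized reflections with reflection vectors `α i` of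
eigenvalues `lam i`. If `α 1, …, α k` are linearly independent, then for every
`0 ≤ d < k` the intersection `⋂_{1 ≤ i ≤ k} V_{d, s i}^-` is the zero subspace of
`⋀^d V`. -/
theorem iInf_eigenspace_eq_bot_of_lt
    [FiniteDimensional F V] (ρ : Representation F W V)
    {k : ℕ} (s : Fin k → W) (α : Fin k → V) (lam : Fin k → F)
    (hrefl : ∀ i, IsReflection (ρ (s i)))
    (hα : ∀ i, α i ≠ 0)
    (hαmem : ∀ i, α i ∈ LinearMap.range (ρ (s i) - LinearMap.id))
    (heig : ∀ i, ρ (s i) (α i) = lam i • α i)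
    (hlam : ∀ i, lam i ≠ 1)
    (hli : LinearIndependent F α) :
    ∀ d : ℕ, d < k →
      (⨅ i : Fin k, Module.End.eigenspace ((extRep ρ d) (s i)) (lam i)) = ⊥ :=
  iInf_eigenspace_eq_bot_of_lt_general ρ s α lam hrefl hαmem hlam hli
end

section
/- Let ρ: W → GL(V) be an n-dimensional representation of a group W, and let s₁, …, s_k ∈ W be such that each s_i acts on V as a generalized reflection with reflection vector α_i of eigenvalue λ_i. Suppose α₁, …, α_k are linearly independent, and extend them to a basis {α₁, …, α_k, α_{k+1}, …, α_n} of V. Then for every k ≤ d ≤ n, the intersection ⋂_{1 ≤ i ≤ k} V_{d,s_i}^− has basis {α₁ ∧ ⋯ ∧ α_k ∧ α_{j_{k+1}} ∧ ⋯ ∧ α_{j_d} : k+1 ≤ j_{k+1} < ⋯ < j_d ≤ n}. In particular, for d = k, the intersection ⋂_{1 ≤ i ≤ k} V_{k,s_i}^− is one-dimensional, spanned by α₁ ∧ ⋯ ∧ α_k. -/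
open Module ExteriorAlgebra

variable {F : Type*} [Field F] {V : Type*} [AddCommGroup V] [Module F V]
  {V₂ : Type*} [AddCommGroup V₂] [Module F V₂]

variable {W : Type*} [Group W]

/-!
Fix `i` and write `t = ρ (s i)`. As `t - 1` has rank one and `α i` lies in its image,
`t v = v + c(v) • α i` for all `v`. Expanding multilinearly, `⋀^d t` sends any wedge `w` to `w`
plus a combination of wedges having `α i` as a factor, and multiplies by `1 + c(α i) = lam i` every
wedge that already has `α i` as a factor. Let `U` be the span of those wedges `a_T` of the basis
`a` with `i ∈ T` (recall `α i = a i`); it contains every wedge with factor `α i`, whose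
coordinates are minors with a zero row. So `⋀^d t` is `lam i` on `U` and `⋀^d t - 1` maps into
`U`; since `lam i ≠ 1`, `U` is the whole `lam i`-eigenspace. Intersecting over `i` leaves the span
of the `a_T` with `T ⊇ {0, …, k-1}`, which are exactly the wedges of the statement.
-/

namespace AlternatingMap

variable {R M N : Type*} [CommSemiring R] [AddCommMonoid M] [Module R M] [AddCommMonoid N]
  [Module R N]

theorem map_add_smul_const (x : M) : ∀ {d : ℕ} (f : M [⋀^Fin d]→ₗ[R] N) (v : Fin d → M)
    (c : Fin d → R),
    f (fun j => v j + c j • x) = f v + ∑ j, c j • f (Function.update v j x)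
  | 0, f, v, c => by simp [Subsingleton.elim (fun j => v j + c j • x) v]
  | d + 1, f, v, c => by
    have hcons : ∀ y (w : Fin d → M), f (Fin.cons y w) = f.curryLeft y w := fun _ _ => rfl
    have hx : ∀ (w : Fin d → M) j, f.curryLeft x (Function.update w j x) = 0 := fun w j =>
      f.map_eq_zero_of_eq (i := 0) (j := j.succ) _ (by simp) (Fin.succ_ne_zero j).symm
    have hv : v = Fin.cons (v 0) (Fin.tail v) := (Fin.cons_self_tail v).symm
    have hvc : (fun j => v j + c j • x) =
        Fin.cons (v 0 + c 0 • x) (fun j => Fin.tail v j + Fin.tail c j • x) := by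
      ext j; cases j using Fin.cases <;> rfl
    rw [hvc, hcons, map_add, map_smul, add_apply, smul_apply,
      map_add_smul_const x, map_add_smul_const x, Fin.sum_univ_succ, hv]
    simp only [hx, smul_zero, Finset.sum_const_zero, add_zero, Fin.update_cons_zero,
      ← Fin.cons_update, hcons, Fin.cons_zero, Fin.tail_cons, Fin.tail]
    abel

theorem map_add_smul_of_eq {d : ℕ} (f : M [⋀^Fin d]→ₗ[R] N) {v : Fin d → M} {x : M}
    {j₀ : Fin d} (hv : v j₀ = x) (c : Fin d → R) :
    f (fun j => v j + c j • x) = (1 + c j₀) • f v := by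
  classical
  rw [map_add_smul_const, Finset.sum_eq_single j₀, ← hv, Function.update_eq_self, add_smul,
    one_smul]
  · intro j _ hj
    rw [f.map_eq_zero_of_eq _ (i := j) (j := j₀) (by simp [Function.update_of_ne hj.symm, hv]) hj,
      smul_zero]
  · simp

end AlternatingMap

theorem LinearMap.exists_apply_eq_add_smul {R M : Type*} [Ring R] [AddCommGroup M] [Module R M]
    {t : M →ₗ[R] M} {x : M} (ht : LinearMap.range (t - LinearMap.id) ≤ R ∙ x) :
    ∃ c : M → R, ∀ y, t y = y + c y • x := by
  choose c hc using fun y => Submodule.mem_span_singleton.1 (ht ⟨y, rfl⟩)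
  exact ⟨c, fun y => by simp [hc]⟩

theorem Module.End.eigenspace_eq_of_forall_sub_mem {K M : Type*} [Field K] [AddCommGroup M]
    [Module K M] {g : Module.End K M} {U : Submodule K M} {μ : K} (hμ : μ ≠ 1)
    (hU : U ≤ Module.End.eigenspace g μ) (hsub : ∀ x, g x - x ∈ U) :
    Module.End.eigenspace g μ = U := by
  refine le_antisymm (fun x hx => ?_) hU
  have hx' : (μ - 1) • x ∈ U := by
    simpa [Module.End.mem_eigenspace_iff.1 hx, sub_smul] using hsub x
  simpa [smul_smul, inv_mul_cancel₀ (sub_ne_zero.2 hμ)] using U.smul_mem (μ - 1)⁻¹ hx'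

theorem Module.Basis.iInf_span_image {ι κ R M : Type*} [Semiring R] [AddCommMonoid M]
    [Module R M] (b : Module.Basis ι R M) (P : κ → Set ι) :
    ⨅ j, Submodule.span R (b '' P j) = Submodule.span R (b '' ⋂ j, P j) := by
  ext x
  simp only [Submodule.mem_iInf, Module.Basis.mem_span_image, Set.subset_iInter_iff]

namespace exteriorPower

variable {R M : Type*} [CommRing R] [AddCommGroup M] [Module R M] {n : ℕ}

theorem ιMulti_mem_span_basis_image {I : Type*} [LinearOrder I] (b : Module.Basis I R M)
    {i : I} {w : Fin n → M} {j₀ : Fin n} (hw : w j₀ = b i) :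
    ιMulti R n w ∈ Submodule.span R (b.exteriorPower n '' {S | i ∈ S}) := by
  rw [Module.Basis.mem_span_image]
  intro S hS
  by_contra hi
  refine Finsupp.mem_support_iff.1 hS ?_
  rw [basis_repr_apply, ιMultiDual_apply_ιMulti]
  refine Matrix.det_eq_zero_of_row_eq_zero j₀ fun j => ?_
  have hj : Set.powersetCard.ofFinEmbEquiv.symm S j ≠ i := fun h =>
    hi (h ▸ (Set.powersetCard.mem_range_ofFinEmbEquiv_symm_iff_mem S _).1 ⟨j, rfl⟩)
  simp [hw, hj]

variable {t : M →ₗ[R] M} {x : M}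

theorem map_ιMulti_sub_self_mem (ht : LinearMap.range (t - LinearMap.id) ≤ R ∙ x)
    {U : Submodule R (⋀[R]^n M)} (hU : ∀ (w : Fin n → M) j, w j = x → ιMulti R n w ∈ U)
    (v : Fin n → M) : map n t (ιMulti R n v) - ιMulti R n v ∈ U := by
  obtain ⟨c, hc⟩ := t.exists_apply_eq_add_smul ht
  rw [map_apply_ιMulti, Function.comp_def]
  simp only [hc]
  rw [AlternatingMap.map_add_smul_const, add_sub_cancel_left]
  exact Submodule.sum_mem _ fun j _ => U.smul_mem _ (hU _ j (by simp))

theorem map_sub_self_mem (ht : LinearMap.range (t - LinearMap.id) ≤ R ∙ x)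
    {U : Submodule R (⋀[R]^n M)} (hU : ∀ (w : Fin n → M) j, w j = x → ιMulti R n w ∈ U)
    (y : ⋀[R]^n M) : map n t y - y ∈ U := by
  have hall : Submodule.comap (map n t - LinearMap.id) U = ⊤ := by
    rw [eq_top_iff, ← ιMulti_span, Submodule.span_le]
    rintro - ⟨v, rfl⟩
    exact map_ιMulti_sub_self_mem ht hU v
  simpa using hall.ge (Submodule.mem_top (x := y))

theorem map_ιMulti_eq_smul_of_eq [IsDomain R] [Module.IsTorsionFree R M]
    (ht : LinearMap.range (t - LinearMap.id) ≤ R ∙ x) {μ : R} (htx : t x = μ • x)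
    {v : Fin n → M} {j₀ : Fin n} (hv : v j₀ = x) :
    map n t (ιMulti R n v) = μ • ιMulti R n v := by
  rcases eq_or_ne x 0 with rfl | hx
  · simp [AlternatingMap.map_coord_zero _ j₀ hv]
  obtain ⟨c, hc⟩ := t.exists_apply_eq_add_smul ht
  have hμ : 1 + c x = μ := smul_left_injective R hx (by simp [add_smul, ← hc, htx])
  rw [map_apply_ιMulti, Function.comp_def]
  simp only [hc]
  rw [AlternatingMap.map_add_smul_of_eq _ hv, hv, hμ]

theorem eigenspace_map_eq_span_basis_image {K V I : Type*} [Field K] [AddCommGroup V]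
    [Module K V] [LinearOrder I] (b : Module.Basis I K V) {i : I} {t : V →ₗ[K] V}
    (ht : LinearMap.range (t - LinearMap.id) ≤ K ∙ b i) {μ : K} (hμ : μ ≠ 1)
    (hti : t (b i) = μ • b i) (n : ℕ) :
    Module.End.eigenspace (map n t) μ = Submodule.span K (b.exteriorPower n '' {S | i ∈ S}) := by
  refine Module.End.eigenspace_eq_of_forall_sub_mem hμ ?_
    (map_sub_self_mem ht fun _ _ hw => ιMulti_mem_span_basis_image b hw)
  rw [Submodule.span_le]
  rintro - ⟨S, hS, rfl⟩
  obtain ⟨j₀, hj₀⟩ := (Set.powersetCard.mem_range_ofFinEmbEquiv_symm_iff_mem S i).2 hS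
  rw [SetLike.mem_coe, Module.End.mem_eigenspace_iff, basis_apply]
  exact map_ιMulti_eq_smul_of_eq ht hti (j₀ := j₀) (by simp [hj₀])

end exteriorPower

theorem extRep_apply (ρ : Representation F W V) (d : ℕ) (w : W) :
    extRep ρ d w = exteriorPower.map d (ρ w) := by
  ext v
  simp [extRep, Function.comp_def]

theorem wedge_eq_ιMulti (d : ℕ) (v : Fin d → V) :
    wedge (F := F) d v = exteriorPower.ιMulti F d v :=
  rfl

section InitialSegment

variable {n k d : ℕ} (hkn : k ≤ n)

theorem Fin.mem_map_castLEEmb_univ {j : Fin n} :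
    j ∈ Finset.univ.map (Fin.castLEEmb hkn) ↔ (j : ℕ) < k := by
  simp only [Finset.mem_map, Finset.mem_univ, true_and]
  exact ⟨fun ⟨i, hi⟩ => hi ▸ i.isLt, fun h => ⟨⟨j, h⟩, rfl⟩⟩

def unionInitialSegment
    (t : {t : Finset (Fin n) // (∀ j ∈ t, k ≤ (j : ℕ)) ∧ t.card + k = d}) :
    Set.powersetCard (Fin n) d :=
  Set.powersetCard.ofCard (s := Finset.univ.map (Fin.castLEEmb hkn) ∪ t.1) <| by
    rw [Finset.card_union_of_disjoint, Finset.card_map, Finset.card_univ, Fintype.card_fin,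
      add_comm, t.2.2]
    exact Finset.disjoint_left.2 fun j hj hjt => by
      have := (Fin.mem_map_castLEEmb_univ hkn).1 hj
      have := t.2.1 j hjt
      omega

theorem mem_unionInitialSegment
    {t : {t : Finset (Fin n) // (∀ j ∈ t, k ≤ (j : ℕ)) ∧ t.card + k = d}} {j : Fin n} :
    j ∈ unionInitialSegment hkn t ↔ (j : ℕ) < k ∨ j ∈ t.1 := by
  rw [← Set.powersetCard.mem_coe_iff, unionInitialSegment, Set.powersetCard.val_ofCard,
    Finset.mem_union, Fin.mem_map_castLEEmb_univ]

theorem unionInitialSegment_injective :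
    Function.Injective (unionInitialSegment (d := d) hkn) := by
  intro t₁ t₂ h
  ext j
  have hj : (j : ℕ) < k ∨ j ∈ t₁.1 ↔ (j : ℕ) < k ∨ j ∈ t₂.1 := by
    rw [← mem_unionInitialSegment hkn, ← mem_unionInitialSegment hkn, h]
  have h₁ := t₁.2.1 j
  have h₂ := t₂.2.1 j
  grind

theorem range_unionInitialSegment :
    Set.range (unionInitialSegment (d := d) hkn) = {S | ∀ i : Fin k, Fin.castLE hkn i ∈ S} := by
  ext S
  constructor
  · rintro ⟨t, rfl⟩ i
    exact (mem_unionInitialSegment hkn).2 (Or.inl i.isLt)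
  · intro hS
    have hlow :
        S.1.filter (fun j : Fin n => ¬ k ≤ (j : ℕ)) = Finset.univ.map (Fin.castLEEmb hkn) := by
      ext j
      rw [Finset.mem_filter, Fin.mem_map_castLEEmb_univ]
      exact ⟨fun h => by omega, fun h => ⟨hS ⟨j, h⟩, by omega⟩⟩
    have hcard := Finset.card_filter_add_card_filter_not (s := S.1) fun j : Fin n => k ≤ (j : ℕ)
    rw [hlow, Finset.card_map, Finset.card_univ, Fintype.card_fin,
      Set.powersetCard.card_eq] at hcard
    refine ⟨⟨S.1.filter fun j : Fin n => k ≤ (j : ℕ),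
      fun j hj => (Finset.mem_filter.1 hj).2, hcard⟩, SetLike.ext fun j => ?_⟩
    rw [mem_unionInitialSegment, Finset.mem_filter, Set.powersetCard.mem_coe_iff]
    by_cases hjk : (j : ℕ) < k
    · simpa [hjk] using hS ⟨j, hjk⟩
    · simp [hjk, not_lt.1 hjk]

theorem ofFinEmbEquiv_symm_unionInitialSegment
    (t : {t : Finset (Fin n) // (∀ j ∈ t, k ≤ (j : ℕ)) ∧ t.card + k = d}) :
    ⇑(Set.powersetCard.ofFinEmbEquiv.symm (unionInitialSegment hkn t)) =
      fun i : Fin d => if h : (i : ℕ) < k then Fin.castLE hkn ⟨i, h⟩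
        else t.1.orderEmbOfFin rfl (Fin.subNat k (Fin.cast t.2.2.symm i) (not_lt.1 h)) := by
  rw [Set.powersetCard.ofFinEmbEquiv_symm_apply]
  symm
  apply Finset.orderEmbOfFin_unique
  · intro i
    rw [Set.powersetCard.mem_coe_iff, mem_unionInitialSegment]
    split_ifs with h
    · exact Or.inl h
    · exact Or.inr (by simp)
  · intro i j hij
    have hlt : (i : ℕ) < j := hij
    have hge : ∀ m, k ≤ ((t.1.orderEmbOfFin rfl m : Fin n) : ℕ) :=
      fun m => t.2.1 _ (Finset.orderEmbOfFin_mem _ _ m)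
    dsimp only
    split_ifs with hi hj hj
    · exact hij
    · exact Fin.lt_def.2 (by simpa using hi.trans_le (hge _))
    · omega
    · refine (t.1.orderEmbOfFin rfl).strictMono (Fin.lt_def.2 ?_)
      simp only [Fin.val_subNat, Fin.val_cast]
      omega

end InitialSegment

/-- Definitionally the family of `iInf_eigenspace_basis_of_le`. Its index `⟨i - k, by omega⟩` is
written with `Fin.subNat` here: Lean would abstract that proof into an auxiliary lemma, which the
statement of the theorem would then reuse instead of its own. -/
noncomputable def extendedWedge {n k : ℕ} (α : Fin k → V) (a : Fin n → V) (d : ℕ)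
    (t : {t : Finset (Fin n) // (∀ j ∈ t, k ≤ (j : ℕ)) ∧ t.card + k = d}) : ⋀[F]^d V :=
  wedge d (fun i => if h : (i : ℕ) < k then α ⟨(i : ℕ), h⟩
    else a ↑(t.1.orderIsoOfFin rfl (Fin.subNat k (Fin.cast t.2.2.symm i) (not_lt.1 h))))

theorem extendedWedge_eq_comp {n k d : ℕ} (hkn : k ≤ n) {α : Fin k → V} {a : Fin n → V}
    (ha : ∀ i : Fin k, a (Fin.castLE hkn i) = α i) (b : Module.Basis (Fin n) F V)
    (hb : ⇑b = a) :
    extendedWedge α a d = b.exteriorPower d ∘ unionInitialSegment hkn := by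
  funext t
  rw [Function.comp_apply, exteriorPower.basis_apply, extendedWedge, wedge_eq_ιMulti,
    exteriorPower.ιMulti_family, ofFinEmbEquiv_symm_unionInitialSegment, hb]
  congr 1
  funext i
  rw [Function.comp_apply]
  split_ifs
  exacts [(ha _).symm, rfl]

theorem extendedWedge_empty {n k : ℕ} (α : Fin k → V) (a : Fin n → V) :
    extendedWedge α a k ⟨∅, by simp, by simp⟩ = wedge (F := F) k α := by
  rw [extendedWedge]
  congr 1
  funext i
  rw [dif_pos i.isLt]

theorem range_extendedWedge_self {n k : ℕ} (α : Fin k → V) (a : Fin n → V) :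
    Set.range (extendedWedge α a k) = {wedge (F := F) k α} := by
  refine Set.eq_singleton_iff_unique_mem.2 ⟨⟨_, extendedWedge_empty α a⟩, ?_⟩
  rintro - ⟨t, rfl⟩
  obtain rfl : t = ⟨∅, by simp, by simp⟩ := Subtype.ext (Finset.card_eq_zero.1 (by omega))
  exact extendedWedge_empty α a

/-- Let `ρ : W → GL(V)` be an `n`-dimensional representation and let
`s 1, …, s k ∈ W` act on `V` as generalized reflections with linearly independent
reflection vectors `α i` of eigenvalues `lam i`; extend the `α i` to a basis
`a : Fin n → V` of `V` (with `a i = α i` for `i < k`). Then for every `k ≤ d ≤ n` the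
wedges `α 1 ∧ ⋯ ∧ α k ∧ a j_{k+1} ∧ ⋯ ∧ a j_d` (for `k ≤ j_{k+1} < ⋯ < j_d < n`) form a
basis of `⋂_{1 ≤ i ≤ k} V_{d, s i}^-`; in particular for `d = k` this intersection is
one-dimensional, spanned by `α 1 ∧ ⋯ ∧ α k`. -/
theorem iInf_eigenspace_basis_of_le
    (ρ : Representation F W V)
    {n : ℕ}
    {k : ℕ} (s : Fin k → W) (α : Fin k → V) (lam : Fin k → F)
    (hrefl : ∀ i, IsReflection (ρ (s i)))
    (hαmem : ∀ i, α i ∈ LinearMap.range (ρ (s i) - LinearMap.id))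
    (heig : ∀ i, ρ (s i) (α i) = lam i • α i)
    (hlam : ∀ i, lam i ≠ 1)
    (hkn : k ≤ n) (a : Fin n → V) (hali : LinearIndependent F a)
    (haspan : Submodule.span F (Set.range a) = ⊤)
    (ha : ∀ i : Fin k, a (Fin.castLE hkn i) = α i) :
    (∀ d : ℕ, k ≤ d → d ≤ n →
      LinearIndependent F
        (fun t : {t : Finset (Fin n) // (∀ j ∈ t, k ≤ (j : ℕ)) ∧ t.card + k = d} =>
          wedge (F := F) d (fun i => if h : (i : ℕ) < k then α ⟨(i : ℕ), h⟩
            else a ↑(t.1.orderIsoOfFin rfl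
              ⟨(i : ℕ) - k, by have h1 := i.isLt; have h2 := t.2.2; omega⟩))) ∧
      Submodule.span F (Set.range
          (fun t : {t : Finset (Fin n) // (∀ j ∈ t, k ≤ (j : ℕ)) ∧ t.card + k = d} =>
            wedge (F := F) d (fun i => if h : (i : ℕ) < k then α ⟨(i : ℕ), h⟩
              else a ↑(t.1.orderIsoOfFin rfl
                ⟨(i : ℕ) - k, by have h1 := i.isLt; have h2 := t.2.2; omega⟩)))) =
        ⨅ i : Fin k, Module.End.eigenspace ((extRep ρ d) (s i)) (lam i)) ∧
    (⨅ i : Fin k, Module.End.eigenspace ((extRep ρ k) (s i)) (lam i)) =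
      Submodule.span F {wedge (F := F) k α} ∧
    Module.finrank F
      (⨅ i : Fin k, Module.End.eigenspace ((extRep ρ k) (s i)) (lam i) : Submodule F _) = 1 := by
  let b := Module.Basis.mk hali haspan.ge
  have hb : ⇑b = a := Module.Basis.coe_mk _ _
  have heigen : ∀ d i, Module.End.eigenspace ((extRep ρ d) (s i)) (lam i) =
      Submodule.span F (b.exteriorPower d '' {S | Fin.castLE hkn i ∈ S}) := fun d i => by
    have hα0 : α i ≠ 0 := ha i ▸ hali.ne_zero _
    rw [extRep_apply]
    refine exteriorPower.eigenspace_map_eq_span_basis_image b ?_ (hlam i) ?_ d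
    · rw [hb, ha]
      exact (eq_span_singleton_of_mem_of_finrank_eq_one (hrefl i).2 (hαmem i) hα0).le
    · rw [hb, ha, heig]
  have key : ∀ d, LinearIndependent F (extendedWedge α a d) ∧
      Submodule.span F (Set.range (extendedWedge α a d)) =
        ⨅ i, Module.End.eigenspace ((extRep ρ d) (s i)) (lam i) := fun d => by
    rw [extendedWedge_eq_comp hkn ha b hb, Set.range_comp, range_unionInitialSegment,
      iInf_congr (heigen d), Module.Basis.iInf_span_image, Set.iInter_ofPred]
    exact ⟨(b.exteriorPower d).linearIndependent.comp _ (unionInitialSegment_injective hkn),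
      rfl⟩
  have hk := (key k).2
  rw [range_extendedWedge_self] at hk
  refine ⟨fun d _ _ => key d, hk.symm, ?_⟩
  rw [← hk, finrank_span_singleton]
  exact extendedWedge_empty (F := F) α a ▸ (key k).1.ne_zero _
end

section
/- Let ρ: W → GL(V) be an n-dimensional representation of a group W over a field F, and suppose there exists s ∈ W acting on V as a generalized reflection. If 0 ≤ k, l ≤ n are integers such that ⋀^k V and ⋀^l V are isomorphic as W-modules, then k = l. -/
/-!
Both the dimension of a `W`-module and the dimension of the fixed space of `s` on it are
isomorphism invariants. Choose an eigenbasis `b₀, …, b_{n-1}` of the reflection `s`, with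
`s b₀ = c • b₀`, `c ≠ 1`, and `s bᵢ = bᵢ` otherwise. The wedges `b_I` (`#I = d`) then form an
eigenbasis of `⋀^d s`, with eigenvalue `c` if `0 ∈ I` and `1` otherwise, so `⋀^d V` has dimension
`C(n, d)` and its `s`-fixed space has dimension `C(n - 1, d)`. Since
`C(n - 1, d) * n = C(n, d) * (n - d)`, these two numbers determine `d ≤ n`.
-/

open Module ExteriorAlgebra

variable {F : Type*} [Field F] {V : Type*} [AddCommGroup V] [Module F V]
  {V₂ : Type*} [AddCommGroup V₂] [Module F V₂]

variable {W : Type*} [Group W]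

/-- Irreducibility (simplicity) of a representation: the space is nonzero and the only
invariant subspaces are `⊥` and `⊤`. -/
def Representation.IsIrreducibleRep (ρ : Representation F W V) : Prop :=
  Nontrivial V ∧
    ∀ U : Submodule F V, (∀ w : W, ∀ v ∈ U, ρ w v ∈ U) → U = ⊥ ∨ U = ⊤

theorem Nat.eq_of_choose_eq_of_choose_succ_eq {m k l : ℕ} (hk : k ≤ m + 1) (hl : l ≤ m + 1)
    (h : m.choose k = m.choose l) (hsucc : (m + 1).choose k = (m + 1).choose l) : k = l := by
  have key := Nat.choose_mul_succ_eq m k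
  rw [h, Nat.choose_mul_succ_eq, ← hsucc] at key
  have := Nat.eq_of_mul_eq_mul_left (Nat.choose_pos hk) key
  omega

theorem Set.powersetCard.card_notMem {α : Type*} [Fintype α] (a : α) (d : ℕ) :
    Nat.card {s : Set.powersetCard α d // a ∉ s} = (Fintype.card α - 1).choose d := by
  classical
  have e : {s : Set.powersetCard α d // a ∉ s} ≃
      {s : Finset α // s ∈ Finset.powersetCard d (Finset.univ.erase a)} :=
    (Equiv.subtypeSubtypeEquivSubtypeInter _ (fun s : Finset α => a ∉ s)).trans
      (Equiv.subtypeEquivRight fun s => by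
        simp [Set.powersetCard.mem_iff, Finset.mem_powersetCard, Finset.subset_erase, and_comm])
  rw [Nat.card_congr e, Nat.card_eq_fintype_card, Fintype.card_coe, Finset.card_powersetCard,
    Finset.card_erase_of_mem (Finset.mem_univ a), Finset.card_univ]

theorem LinearMap.finrank_ker_of_apply_basis_eq_smul {K M κ : Type*} [Field K]
    [AddCommGroup M] [Module K M] [Fintype κ] (B : Basis κ K M) (T : M →ₗ[K] M) (ν : κ → K)
    (hT : ∀ i, T (B i) = ν i • B i) :
    finrank K (LinearMap.ker T) = Nat.card {i // ν i = 0} := by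
  classical
  have : FiniteDimensional K M := .of_basis B
  have hdiag : T = Matrix.toLin B B (Matrix.diagonal ν) :=
    B.ext fun i => by simp [Matrix.toLin_self, Matrix.diagonal_apply, hT]
  have hrange : finrank K (LinearMap.range T) = Fintype.card {i // ν i ≠ 0} := by
    rw [hdiag, ← Matrix.rank_eq_finrank_range_toLin, Matrix.rank_diagonal]
  have := LinearMap.finrank_range_add_finrank_ker T
  rw [hrange, finrank_eq_card_basis B, Fintype.card_subtype_compl] at this
  have := Fintype.card_subtype_le fun i => ν i = 0
  rw [Nat.card_eq_fintype_card]
  omega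

namespace exteriorPower

open Set.powersetCard

variable {R M ι : Type*} [CommRing R] [AddCommGroup M] [Module R M] [LinearOrder ι]

theorem map_basis_of_apply_eq_smul (b : Basis ι R M) (T : M →ₗ[R] M) (μ : ι → R)
    (hT : ∀ i, T (b i) = μ i • b i) (d : ℕ) (s : Set.powersetCard ι d) :
    map d T (b.exteriorPower d s) = (∏ i ∈ (s : Finset ι), μ i) • b.exteriorPower d s := by
  have hTb : T ∘ b = fun i => μ i • b i := funext hT
  have hprod : ∏ i ∈ (s : Finset ι), μ i = ∏ j, μ (ofFinEmbEquiv.symm s j) := by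
    conv_lhs => rw [← Finset.map_orderEmbOfFin_univ s.val s.prop]
    rw [Finset.prod_map]
    rfl
  rw [basis_apply, map_apply_ιMulti_family, hTb, ιMulti_family, ιMulti_family, hprod]
  exact (ιMulti R d).toMultilinearMap.map_smul_univ _ _

end exteriorPower

theorem exteriorPower.finrank_ker_map_sub_one_of_basis_reflection {ι : Type*} [Fintype ι]
    [LinearOrder ι] (b : Basis ι F V) (T : V →ₗ[F] V) (i₀ : ι) {c : F} (hc : c ≠ 1)
    (hT : ∀ i, T (b i) = Function.update (1 : ι → F) i₀ c i • b i) (d : ℕ) :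
    finrank F (LinearMap.ker (exteriorPower.map d T - 1)) = (Fintype.card ι - 1).choose d := by
  classical
  have hprod (s : Set.powersetCard ι d) :
      ∏ i ∈ (s : Finset ι), Function.update (1 : ι → F) i₀ c i = if i₀ ∈ s then c else 1 := by
    split_ifs with h
    · simp [Finset.prod_update_of_mem (Set.powersetCard.mem_coe_iff.mpr h)]
    · simp [Finset.prod_update_of_notMem (mt Set.powersetCard.mem_coe_iff.mp h)]
  have hdiag (s : Set.powersetCard ι d) :
      (exteriorPower.map d T - 1) (b.exteriorPower d s)
        = ((if i₀ ∈ s then c else 1) - 1) • b.exteriorPower d s := by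
    rw [LinearMap.sub_apply, exteriorPower.map_basis_of_apply_eq_smul b T _ hT, hprod,
      Module.End.one_apply]
    module
  rw [LinearMap.finrank_ker_of_apply_basis_eq_smul _ _ _ hdiag,
    ← Set.powersetCard.card_notMem i₀ d]
  refine Nat.card_congr (Equiv.subtypeEquivRight fun s => ?_)
  split_ifs with h <;> simp [h, sub_eq_zero, hc]

namespace Representation

variable {R G M₁ M₂ : Type*} [CommRing R] [Monoid G] [AddCommGroup M₁] [Module R M₁]
  [AddCommGroup M₂] [Module R M₂] {ρ₁ : Representation R G M₁} {ρ₂ : Representation R G M₂}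

theorem Iso.finrank_eq (h : ρ₁.Iso ρ₂) : finrank R M₁ = finrank R M₂ :=
  h.elim fun e _ => e.finrank_eq

theorem Iso.finrank_ker_sub_one_eq (h : ρ₁.Iso ρ₂) (g : G) :
    finrank R (LinearMap.ker (ρ₁ g - 1)) = finrank R (LinearMap.ker (ρ₂ g - 1)) := by
  obtain ⟨e, he⟩ := h
  have hcomm : e.toLinearMap ∘ₗ (ρ₁ g - 1) = (ρ₂ g - 1) ∘ₗ e.toLinearMap := by
    ext v
    simp [he]
  have hker : LinearMap.ker (ρ₁ g - 1) = (LinearMap.ker (ρ₂ g - 1)).comap e.toLinearMap := by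
    rw [← LinearMap.ker_comp, ← hcomm, LinearEquiv.ker_comp]
  rw [hker, Submodule.comap_equiv_eq_map_symm, LinearEquiv.finrank_map_eq]

end Representation

theorem extMap_eq_map (d : ℕ) (f : V →ₗ[F] V₂) : extMap d f = exteriorPower.map d f := by
  ext v
  simp [ExteriorAlgebra.map_apply_ιMulti, Function.comp_def]

namespace IsReflection

variable {T : V →ₗ[F] V}

theorem exists_hasEigenvalue_ne_one (hT : IsReflection T) :
    ∃ c, c ≠ 1 ∧ Module.End.HasEigenvalue T c := by
  by_contra! h
  have hfix : Module.End.eigenspace T 1 = ⊤ := by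
    refine top_le_iff.mp (hT.1 ▸ iSup_le fun μ => ?_)
    by_cases hμ : μ = 1
    · rw [hμ]
    · simp [of_not_not (h μ hμ)]
  have hid : T - LinearMap.id = 0 := by
    ext v
    have hv := Module.End.mem_eigenspace_iff.mp (hfix ▸ Submodule.mem_top (x := v))
    rw [one_smul] at hv
    simp [hv]
  have := hT.2
  rw [hid, LinearMap.range_zero, finrank_bot] at this
  exact zero_ne_one this

theorem exists_basis [FiniteDimensional F V] (hT : IsReflection T) :
    ∃ (m : ℕ) (b : Basis (Fin (m + 1)) F V) (c : F), c ≠ 1 ∧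
      ∀ i, T (b i) = Function.update (1 : Fin (m + 1) → F) 0 c i • b i := by
  obtain ⟨c, hc, hcT⟩ := hT.exists_hasEigenvalue_ne_one
  obtain ⟨v, hv⟩ := hcT.exists_hasEigenvector
  have hTv : T v = c • v := hv.apply_eq_smul
  obtain ⟨-, hrank⟩ := hT
  set S : V →ₗ[F] V := T - LinearMap.id with hS
  have hSv : S v = (c - 1) • v := by
    rw [hS, LinearMap.sub_apply, hTv, LinearMap.id_apply, sub_smul, one_smul]
  have hne : (c - 1) • v ≠ 0 := smul_ne_zero (sub_ne_zero.mpr hc) hv.2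
  set N := LinearMap.ker S
  have hli (a : F) (x : V) (hx : x ∈ N) (h : a • v + x = 0) : a = 0 := by
    have := congrArg S h
    rw [map_add, map_smul, hSv, LinearMap.mem_ker.mp hx, add_zero, map_zero] at this
    exact (smul_eq_zero.mp this).resolve_right hne
  have hsp (z : V) : ∃ a : F, z + a • v ∈ N := by
    obtain ⟨a, ha⟩ := (finrank_eq_one_iff_of_nonzero' (⟨_, LinearMap.mem_range_self S v⟩ :
      LinearMap.range S) (by simpa [hSv] using hne)).mp hrank ⟨_, LinearMap.mem_range_self S z⟩
    refine ⟨-a, ?_⟩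
    have hz : a • S v = S z := by simpa using congrArg Subtype.val ha
    rw [LinearMap.mem_ker, map_add, map_smul, ← hz]
    module
  refine ⟨finrank F N, Basis.mkFinCons v (Module.finBasis F N) hli hsp, c, hc, fun i => ?_⟩
  rw [Basis.coe_mkFinCons]
  refine Fin.cases ?_ (fun j => ?_) i
  · simpa using hTv
  · have := LinearMap.mem_ker.mp (Module.finBasis F N j).2
    rw [hS, LinearMap.sub_apply, LinearMap.id_apply, sub_eq_zero] at this
    simpa using this

end IsReflection

/-- Let `ρ : W → GL(V)` be an `n`-dimensional representation of a group
`W` and suppose some `s ∈ W` acts on `V` as a generalized reflection. If `0 ≤ k, l ≤ n`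
and `⋀^k V ≅ ⋀^l V` as `W`-modules, then `k = l`. -/
theorem eq_of_iso_exteriorPower
    [FiniteDimensional F V] (ρ : Representation F W V)
    {n : ℕ} (hn : Module.finrank F V = n)
    (s : W) (hs : IsReflection (ρ s))
    (k l : ℕ) (hk : k ≤ n) (hl : l ≤ n)
    (hiso : (extRep ρ k).Iso (extRep ρ l)) : k = l := by
  obtain ⟨m, b, c, hc, hb⟩ := hs.exists_basis
  obtain rfl : n = m + 1 := by rw [← hn, finrank_eq_card_basis b, Fintype.card_fin]
  have hdim : (m + 1).choose k = (m + 1).choose l := by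
    simpa only [exteriorPower.finrank_eq, hn] using hiso.finrank_eq
  have hfix : m.choose k = m.choose l := by
    have := hiso.finrank_ker_sub_one_eq s
    rwa [extRep_apply, extRep_apply,
      exteriorPower.finrank_ker_map_sub_one_of_basis_reflection b _ 0 hc hb,
      exteriorPower.finrank_ker_map_sub_one_of_basis_reflection b _ 0 hc hb,
      Fintype.card_fin, Nat.add_sub_cancel] at this
  exact Nat.eq_of_choose_eq_of_choose_succ_eq hk hl hfix hdim
end

section
/- Let G = (S, E) be a finite connected simple graph and let I, J ⊆ S be subsets with |I| = |J| = d. Then J can be obtained from I by finitely many moves. -/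
/-- `I'` is obtained from `I` by a *move* in the graph `G`: some vertex `r ∈ I` is moved
along an edge `{r, t}` to a vertex `t ∉ I`, i.e. `I' = (I \ {r}) ∪ {t}`. -/
def GraphMove {S : Type*} [DecidableEq S] (G : SimpleGraph S) (I I' : Finset S) : Prop :=
  ∃ r ∈ I, ∃ t ∉ I, G.Adj r t ∧ I' = insert t (I.erase r)

/-- Slide a token along a walk: if `a ∉ I` and `b ∈ I`, then by moves we can reach
`insert a (I.erase c)` for some `c ∈ I` on the walk; moreover if `c ≠ b` there is a
walk from `c` to `b` strictly shorter than `w`. -/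
lemma slide_along_walk {S : Type*} [DecidableEq S] (G : SimpleGraph S) :
    ∀ {a b : S} (w : G.Walk a b) (I : Finset S), a ∉ I → b ∈ I →
    ∃ c ∈ I, Relation.ReflTransGen (GraphMove G) I (insert a (I.erase c)) ∧
      (c = b ∨ ∃ p : G.Walk c b, p.length < w.length) := by
  intro a b w
  induction w with
  | nil =>
    intro I ha hb; exact absurd hb ha
  | @cons u u' v hadj w' ih =>
    intro I ha hb
    by_cases ha' : u' ∈ I
    · refine ⟨u', ha', ?_, ?_⟩
      · exact Relation.ReflTransGen.single ⟨u', ha', u, ha, hadj.symm, rfl⟩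
      · by_cases h : u' = v
        · exact Or.inl h
        · exact Or.inr ⟨w', by simp [SimpleGraph.Walk.length_cons]⟩
    · obtain ⟨c, hc, hmoves, hrest⟩ := ih I ha' hb
      have hac : u ≠ c := fun h => ha (h ▸ hc)
      have haa' : u ≠ u' := hadj.ne
      refine ⟨c, hc, ?_, ?_⟩
      · have hstep : GraphMove G (insert u' (I.erase c)) (insert u (I.erase c)) := by
          refine ⟨u', Finset.mem_insert_self _ _, u, ?_, hadj.symm, ?_⟩
          · simp only [Finset.mem_insert, Finset.mem_erase]
            push_neg
            exact ⟨haa', fun _ => ha⟩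
          · rw [Finset.erase_insert (fun h => ha' (Finset.mem_of_mem_erase h))]
        exact hmoves.tail hstep
      · rcases hrest with h | ⟨p, hp⟩
        · exact Or.inl h
        · exact Or.inr ⟨p, by simp [SimpleGraph.Walk.length_cons]; omega⟩

/-- Let `G` be a finite connected simple graph on `S` and `I, J ⊆ S`
subsets with `|I| = |J| = d`. Then `J` can be obtained from `I` by finitely many moves. -/
theorem reflTransGen_graphMove_of_card_eq
    {S : Type*} [Fintype S] [DecidableEq S] (G : SimpleGraph S) (hG : G.Connected)
    (d : ℕ) (I J : Finset S) (hI : I.card = d) (hJ : J.card = d) :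
    Relation.ReflTransGen (GraphMove G) I J := by
  classical
  set N : ℕ := Fintype.card S with hN
  -- distance between the "deficit" sets
  set DD : Finset S → ℕ := fun I =>
    sInf {n | ∃ t ∈ J \ I, ∃ r ∈ I \ J, G.dist t r = n} with hDD
  -- distances are bounded by N
  have hdistlt : ∀ u v : S, G.dist u v < N := by
    intro u v
    obtain ⟨p, hp, hlen⟩ := (hG u v).exists_path_of_dist
    calc G.dist u v = p.length := hlen.symm
      _ < N := hp.length_lt
  have key : ∀ n : ℕ, ∀ I : Finset S, I.card = d → (J \ I).card * N + DD I ≤ n →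
      Relation.ReflTransGen (GraphMove G) I J := by
    intro n
    induction n using Nat.strong_induction_on with
    | _ n ihn =>
      intro I hIcard hmeas
      rcases eq_or_ne I J with rfl | hne
      · exact Relation.ReflTransGen.refl
      · -- both deficit sets nonempty
        have hJI : (J \ I).Nonempty := by
          rw [Finset.sdiff_nonempty]
          intro hsub
          exact hne (Finset.eq_of_subset_of_card_le hsub (by omega)).symm
        have hIJ : (I \ J).Nonempty := by
          rw [Finset.sdiff_nonempty]
          intro hsub
          exact hne (Finset.eq_of_subset_of_card_le hsub (by omega))
        obtain ⟨t0, ht0⟩ := hJI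
        obtain ⟨r0, hr0⟩ := hIJ
        have hsetne : {n | ∃ t ∈ J \ I, ∃ r ∈ I \ J, G.dist t r = n}.Nonempty :=
          ⟨G.dist t0 r0, t0, ht0, r0, hr0, rfl⟩
        obtain ⟨t, ht, r, hr, hdist⟩ := Nat.sInf_mem hsetne
        have htJ : t ∈ J := (Finset.mem_sdiff.mp ht).1
        have htI : t ∉ I := (Finset.mem_sdiff.mp ht).2
        have hrI : r ∈ I := (Finset.mem_sdiff.mp hr).1
        have hrJ : r ∉ J := (Finset.mem_sdiff.mp hr).2
        obtain ⟨w, hw⟩ := (hG t r).exists_walk_length_eq_dist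
        obtain ⟨c, hc, hmoves, hrest⟩ := slide_along_walk G w I htI hrI
        set I' : Finset S := insert t (I.erase c) with hI'
        rcases eq_or_ne I' J with hIJ' | hI'ne
        · exact hIJ' ▸ hmoves
        have htc : t ≠ c := fun h => htI (h ▸ hc)
        have hI'card : I'.card = d := by
          rw [hI', Finset.card_insert_of_notMem (by simp [htc, htI]),
            Finset.card_erase_of_mem hc]
          have : 0 < I.card := Finset.card_pos.mpr ⟨c, hc⟩
          omega
        have hfin : ∀ m, (J \ I').card * N + DD I' ≤ m → m < n →
            Relation.ReflTransGen (GraphMove G) I J := by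
          intro m hm hmn
          exact hmoves.trans (ihn m hmn I' hI'card hm)
        have hDDI : DD I = G.dist t r := by
          rw [hDD]
          exact hdist ▸ rfl
        have hNpos : 0 < N := Fintype.card_pos_iff.mpr ⟨t⟩
        -- DD I' < N since I' ≠ J
        have hDD'lt : DD I' < N := by
          have hJI' : (J \ I').Nonempty := by
            rw [Finset.sdiff_nonempty]
            intro hsub
            exact hI'ne (Finset.eq_of_subset_of_card_le hsub (by omega)).symm
          have hIJ' : (I' \ J).Nonempty := by
            rw [Finset.sdiff_nonempty]
            intro hsub
            exact hI'ne (Finset.eq_of_subset_of_card_le hsub (by omega))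
          obtain ⟨t1, ht1⟩ := hJI'
          obtain ⟨r1, hr1⟩ := hIJ'
          calc DD I' ≤ G.dist t1 r1 := Nat.sInf_le ⟨t1, ht1, r1, hr1, rfl⟩
            _ < N := hdistlt t1 r1
        by_cases hcJ : c ∈ J
        · -- c ∈ J : deficit card unchanged, distance strictly drops
          have hcr : c ≠ r := fun h => hrJ (h ▸ hcJ)
          obtain ⟨p, hp⟩ : ∃ p : G.Walk c r, p.length < w.length := by
            rcases hrest with h | h
            · exact absurd h hcr
            · exact h
          have hsd : J \ I' = insert c ((J \ I).erase t) := by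
            ext x
            simp only [hI', Finset.mem_sdiff, Finset.mem_insert, Finset.mem_erase]
            constructor
            · rintro ⟨hxJ, hx⟩
              push_neg at hx
              by_cases hxc : x = c
              · exact Or.inl hxc
              · exact Or.inr ⟨hx.1, hxJ, fun h => (hx.2 hxc).elim h⟩
            · rintro (rfl | ⟨hxt, hxJ, hxI⟩)
              · refine ⟨hcJ, ?_⟩
                push_neg
                exact ⟨htc.symm, fun h => absurd rfl h⟩
              · refine ⟨hxJ, ?_⟩
                push_neg
                exact ⟨hxt, fun _ => hxI⟩
          have hcard' : (J \ I').card = (J \ I).card := by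
            rw [hsd, Finset.card_insert_of_notMem (by
              simp only [Finset.mem_erase, Finset.mem_sdiff]
              push_neg
              intro _ _; exact hc), Finset.card_erase_of_mem ht]
            have : 0 < (J \ I).card := Finset.card_pos.mpr ⟨t, ht⟩
            omega
          have hcI' : c ∈ J \ I' := by
            rw [hsd]; exact Finset.mem_insert_self _ _
          have hrI' : r ∈ I' \ J := by
            simp only [hI', Finset.mem_sdiff, Finset.mem_insert, Finset.mem_erase]
            exact ⟨Or.inr ⟨Ne.symm hcr, hrI⟩, hrJ⟩
          have hDD' : DD I' < DD I := by
            have h1 : DD I' ≤ G.dist c r :=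
              Nat.sInf_le ⟨c, hcI', r, hrI', rfl⟩
            have h2 : G.dist c r ≤ p.length := SimpleGraph.dist_le p
            omega
          exact hfin ((J \ I').card * N + DD I') le_rfl (by rw [hcard']; omega)
        · -- c ∉ J : deficit card strictly drops
          have hsd : J \ I' = (J \ I).erase t := by
            ext x
            simp only [hI', Finset.mem_sdiff, Finset.mem_insert, Finset.mem_erase]
            constructor
            · rintro ⟨hxJ, hx⟩
              push_neg at hx
              refine ⟨hx.1, hxJ, ?_⟩
              by_cases hxc : x = c
              · exact absurd (hxc ▸ hxJ) hcJ
              · exact hx.2 hxc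
            · rintro ⟨hxt, hxJ, hxI⟩
              refine ⟨hxJ, ?_⟩
              push_neg
              exact ⟨hxt, fun _ => hxI⟩
          have hcard' : (J \ I').card = (J \ I).card - 1 := by
            rw [hsd, Finset.card_erase_of_mem ht]
          have hposJI : 0 < (J \ I).card := Finset.card_pos.mpr ⟨t, ht⟩
          refine hfin ((J \ I').card * N + DD I') le_rfl ?_
          rw [hcard']
          have hle : ((J \ I).card - 1) * N + N ≤ (J \ I).card * N := by
            have h1 : ((J \ I).card - 1) * N + N = ((J \ I).card - 1 + 1) * N := by ring
            have h2 : (J \ I).card - 1 + 1 = (J \ I).card := by omega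
            rw [h1, h2]
          omega
  exact key ((J \ I).card * N + DD I) I hI le_rfl
end

section
/- Let G = (S, E) be a finite connected simple graph and let I ⊆ S be a subset with |I| ≥ 2 such that for every vertex t ∈ S \ I, either no r ∈ I satisfies {r, t} ∈ E, or there exist at least two distinct vertices r, r′ ∈ I with {r, t} ∈ E and {r′, t} ∈ E. Then there exists a vertex s ∈ I such that the subgraph of G induced on S \ {s} is connected. -/
/-- Let `G` be a finite connected simple graph on `S` and `I ⊆ S` a
subset with `|I| ≥ 2` such that every vertex `t ∉ I` is adjacent either to no vertex of
`I` or to at least two distinct vertices of `I`. Then some vertex `s ∈ I` can be deleted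
so that the induced subgraph on `S \ {s}` remains connected. -/
theorem exists_delete_connected
    {S : Type*} [Fintype S] [DecidableEq S] (G : SimpleGraph S) (hG : G.Connected)
    (I : Finset S) (hI : 2 ≤ I.card)
    (h : ∀ t : S, t ∉ I →
      (∀ r ∈ I, ¬ G.Adj r t) ∨
        (∃ r ∈ I, ∃ r' ∈ I, r ≠ r' ∧ G.Adj r t ∧ G.Adj r' t)) :
    ∃ s ∈ I, (G.induce {x : S | x ≠ s}).Connected := by
  classical
  obtain ⟨r, hrI⟩ : I.Nonempty := Finset.card_pos.mp (by omega)
  obtain ⟨s, hsI, hmax⟩ := I.exists_max_image (fun v => G.dist r v) ⟨r, hrI⟩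
  have hrs : r ≠ s := by
    obtain ⟨s', hs'I, hs'r⟩ := Finset.exists_mem_ne (s := I) (by omega) r
    intro hrs
    have h1 : 0 < G.dist r s' := hG.pos_dist_of_ne (Ne.symm hs'r)
    have h2 : G.dist r s' ≤ G.dist r s := hmax s' hs'I
    rw [← hrs, SimpleGraph.dist_self] at h2
    omega
  have hrmem : r ∈ {x : S | x ≠ s} := hrs
  have key : ∀ n : ℕ, ∀ t : S, ∀ ht : t ∈ {x : S | x ≠ s}, G.dist r t ≤ n →
      (G.induce {x : S | x ≠ s}).Reachable ⟨r, hrmem⟩ ⟨t, ht⟩ := by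
    intro n
    induction n with
    | zero =>
      intro t ht hd
      have : t = r := by
        by_contra hne
        have := hG.pos_dist_of_ne (show r ≠ t from fun e => hne e.symm)
        omega
      subst this
      exact SimpleGraph.Reachable.refl _
    | succ m ih =>
      intro t ht hd
      by_cases htr : t = r
      · subst htr
        exact SimpleGraph.Reachable.refl _
      · obtain ⟨p, hp⟩ := (hG t r).exists_walk_length_eq_dist
        cases p with
        | nil => exact absurd rfl htr
        | @cons _ t' _ hadj q =>
          rw [SimpleGraph.Walk.length_cons] at hp
          have hdist : G.dist t r = q.length + 1 := hp.symm
          have hcomm : G.dist r t = G.dist t r := SimpleGraph.dist_comm ..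
          have hql : q.length ≤ m := by omega
          by_cases ht's : t' = s
          · -- t is adjacent to s; the walk continues from s to r
            have hadjs : G.Adj t s := ht's ▸ hadj
            have hdrs : G.dist s r ≤ q.length := ht's ▸ SimpleGraph.dist_le q
            have hsr : G.dist r s = G.dist s r := SimpleGraph.dist_comm ..
            have htlarge : G.dist r s < G.dist r t := by omega
            have htI : t ∉ I := by
              intro htI
              have := hmax t htI
              omega
            rcases h t htI with hnone | ⟨r1, hr1, r2, hr2, hne12, ha1, ha2⟩
            · exact absurd hadjs.symm (hnone s hsI)
            · obtain ⟨r', hr'I, hr's, hadj'⟩ : ∃ r', r' ∈ I ∧ r' ≠ s ∧ G.Adj r' t := by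
                by_cases h1s : r1 = s
                · exact ⟨r2, hr2, fun e => hne12 (h1s.trans e.symm), ha2⟩
                · exact ⟨r1, hr1, h1s, ha1⟩
              have hdr' : G.dist r r' ≤ m := by
                have := hmax r' hr'I
                omega
              have hreach := ih r' hr's hdr'
              have hedge : (G.induce {x : S | x ≠ s}).Adj ⟨r', hr's⟩ ⟨t, ht⟩ := hadj'
              exact hreach.trans hedge.reachable
          · have hdt' : G.dist r t' ≤ m := by
              have h1 : G.dist t' r ≤ q.length := SimpleGraph.dist_le q
              have h2 : G.dist r t' = G.dist t' r := SimpleGraph.dist_comm ..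
              omega
            have hreach := ih t' ht's hdt'
            have hedge : (G.induce {x : S | x ≠ s}).Adj ⟨t', ht's⟩ ⟨t, ht⟩ := hadj.symm
            exact hreach.trans hedge.reachable
  refine ⟨s, hsI, ?_⟩
  haveI : Nonempty {x : S | x ≠ s} := ⟨⟨r, hrmem⟩⟩
  refine ⟨fun u v => ?_⟩
  exact (key (G.dist r u) u u.2 le_rfl).symm.trans (key (G.dist r v) v v.2 le_rfl)
end

section
/- Let ρ: W → GL(V) be a finite-dimensional irreducible representation of a group W over a field F, and let s₁, …, s_k ∈ W be such that each s_i acts on V as a generalized reflection with reflection vector α_i, and W is generated by {s₁, …, s_k}. Define a graph G on vertex set S = {1, …, k} with edges E = {{i, j} : s_i · α_j ≠ α_j}, and assume that for all i, j, s_i · α_j ≠ α_j if and only if s_j · α_i ≠ α_i. Then the graph G is connected. -/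
open Module ExteriorAlgebra

variable {F : Type*} [Field F] {V : Type*} [AddCommGroup V] [Module F V]
  {V₂ : Type*} [AddCommGroup V₂] [Module F V₂]

variable {W : Type*} [Group W]

/-!
Let `C` be a connected component of the graph and `U` the span of the `α j`, `j ∈ C`.
A generator `s i` with `i ∈ C` moves every vector by a multiple of `α i ∈ U`, while one with
`i ∉ C` fixes each `α j`, `j ∈ C`, since otherwise `i` and `j` would be adjacent. So `U` is stable
under all generators, hence under `W` (a finite-dimensional subspace stable under an invertible
map is stable under its inverse), and irreducibility forces `U = V`. A generator outside `C`
would then act trivially on `V`, which a reflection does not.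
-/

open Submodule in
theorem IsReflection.apply_sub_self_mem_span {s : V →ₗ[F] V} (hs : IsReflection s) {α : V}
    (hα : α ≠ 0) (hαmem : α ∈ LinearMap.range (s - LinearMap.id)) (v : V) :
    s v - v ∈ F ∙ α := by
  have : FiniteDimensional F (LinearMap.range (s - LinearMap.id)) :=
    Module.finite_of_finrank_eq_succ hs.2
  have hrange : F ∙ α = LinearMap.range (s - LinearMap.id) :=
    eq_of_le_of_finrank_eq ((span_singleton_le_iff_mem _ _).mpr hαmem)
      (by rw [finrank_span_singleton hα, hs.2])
  exact hrange ▸ ⟨v, rfl⟩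

theorem IsReflection.ne_id {s : V →ₗ[F] V} (hs : IsReflection s) : s ≠ LinearMap.id := by
  intro h
  have hrank := hs.2
  rw [h, sub_self, LinearMap.range_zero, finrank_bot] at hrank
  exact zero_ne_one hrank

namespace Representation

variable (ρ : Representation F W V)

theorem mem_invtSubmodule_inv {g : W} {p : Submodule F V} [FiniteDimensional F p]
    (h : p ∈ End.invtSubmodule (ρ g)) : p ∈ End.invtSubmodule (ρ g⁻¹) := by
  have hmap : p.map (ρ g) = p :=
    Submodule.eq_of_le_of_finrank_eq ((End.mem_invtSubmodule_iff_map_le _).mp h)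
      (Submodule.equivMapOfInjective _ (ρ.apply_bijective g).1 p).finrank_eq.symm
  intro v hv
  rw [← hmap] at hv
  obtain ⟨u, hu, rfl⟩ := hv
  simpa using hu

theorem mem_invtSubmodule_of_closure_eq_top {S : Set W} (hS : Subgroup.closure S = ⊤)
    {p : Submodule F V} [FiniteDimensional F p] (hp : ∀ g ∈ S, p ∈ End.invtSubmodule (ρ g)) :
    p ∈ ρ.invtSubmodule := by
  rw [ρ.mem_invtSubmodule]
  intro w
  induction (hS ▸ Subgroup.mem_top w : w ∈ Subgroup.closure S) using
    Subgroup.closure_induction with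
  | mem g hg => exact hp g hg
  | one => simp
  | mul g h _ _ hg hh => rw [map_mul]; exact End.invtSubmodule.comp _ hg hh
  | inv g _ hg => exact mem_invtSubmodule_inv ρ hg

end Representation

section ReflectionGraph

open SimpleGraph Submodule

variable {ι : Type*} {G : SimpleGraph ι} {t : ι → Module.End F V} {α : ι → V}
  {c : G.ConnectedComponent}

theorem mem_supp_of_apply_ne (hG : ∀ i j, i ≠ j → t i (α j) ≠ α j → G.Adj i j) {i j : ι}
    (hj : j ∈ c.supp) (h : t i (α j) ≠ α j) : i ∈ c.supp := by
  by_cases hij : i = j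
  · exact hij ▸ hj
  · rw [ConnectedComponent.mem_supp_iff] at hj ⊢
    exact (ConnectedComponent.connectedComponentMk_eq_of_adj (hG i j hij h)).trans hj

theorem apply_eq_self_of_not_mem_supp (hG : ∀ i j, i ≠ j → t i (α j) ≠ α j → G.Adj i j)
    {i : ι} (hi : i ∉ c.supp) {v : V} (hv : v ∈ span F (α '' c.supp)) : t i v = v := by
  suffices span F (α '' c.supp) ≤ LinearMap.ker (t i - 1) by
    simpa [sub_eq_zero] using this hv
  rw [span_le]
  rintro - ⟨j, hj, rfl⟩
  simpa [sub_eq_zero] using not_imp_comm.mp (mem_supp_of_apply_ne hG hj) hi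

theorem span_image_supp_mem_invtSubmodule
    (hG : ∀ i j, i ≠ j → t i (α j) ≠ α j → G.Adj i j) {i : ι}
    (ht : ∀ v, t i v - v ∈ F ∙ α i) : span F (α '' c.supp) ∈ End.invtSubmodule (t i) := by
  rw [End.mem_invtSubmodule_iff_forall_mem_of_mem]
  intro v hv
  by_cases hi : i ∈ c.supp
  · have hαi : F ∙ α i ≤ span F (α '' c.supp) :=
      (span_singleton_le_iff_mem _ _).mpr (subset_span ⟨i, hi, rfl⟩)
    simpa using add_mem hv (hαi (ht v))
  · rwa [apply_eq_self_of_not_mem_supp hG hi hv]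

theorem Representation.IsIrreducible'.connected_of_reflections {ρ : Representation F W V}
    (hirr : ρ.IsIrreducible') [Finite ι] [Nonempty ι] {s : ι → W}
    (hrefl : ∀ i, IsReflection (ρ (s i))) (hα : ∀ i, α i ≠ 0)
    (hαmem : ∀ i, α i ∈ LinearMap.range (ρ (s i) - LinearMap.id))
    (hgen : Subgroup.closure (Set.range s) = ⊤)
    (hG : ∀ i j, i ≠ j → ρ (s i) (α j) ≠ α j → G.Adj i j) : G.Connected := by
  refine ⟨fun i j => ?_⟩
  by_contra hij
  set c := G.connectedComponentMk i
  set U := span F (α '' c.supp)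
  have hUinv : U ∈ ρ.invtSubmodule := by
    have : FiniteDimensional F U := FiniteDimensional.span_of_finite F (Set.toFinite _)
    refine ρ.mem_invtSubmodule_of_closure_eq_top hgen ?_
    rintro - ⟨l, rfl⟩
    exact span_image_supp_mem_invtSubmodule hG
      ((hrefl l).apply_sub_self_mem_span (hα l) (hαmem l))
  have hUtop : U = ⊤ := by
    refine (hirr.2 U fun w => ρ.mem_invtSubmodule.mp hUinv w).resolve_left fun hbot => hα i ?_
    have hαi : α i ∈ U := subset_span ⟨i, rfl, rfl⟩
    rwa [hbot, mem_bot] at hαi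
  have hj : j ∉ c.supp := fun hj => hij (ConnectedComponent.exact hj.symm)
  exact (hrefl j).ne_id (LinearMap.ext fun v =>
    apply_eq_self_of_not_mem_supp hG hj (eq_top_iff'.mp hUtop v))

end ReflectionGraph

theorem reflection_graph_connected_general
    (ρ : Representation F W V)
    {k : ℕ} (hk : 0 < k) (s : Fin k → W) (α : Fin k → V)
    (hrefl : ∀ i, IsReflection (ρ (s i)))
    (hα : ∀ i, α i ≠ 0)
    (hαmem : ∀ i, α i ∈ LinearMap.range (ρ (s i) - LinearMap.id))
    (hgen : Subgroup.closure (Set.range s) = ⊤)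
    (hirr : ρ.IsIrreducible')
    (hsym : ∀ i j, ρ (s i) (α j) ≠ α j ↔ ρ (s j) (α i) ≠ α i) :
    (SimpleGraph.mk (fun i j : Fin k => i ≠ j ∧ ρ (s i) (α j) ≠ α j)
      ⟨fun i j h => ⟨h.1.symm, (hsym i j).mp h.2⟩⟩
      ⟨fun i h => h.1 rfl⟩).Connected :=
  have : Nonempty (Fin k) := ⟨⟨0, hk⟩⟩
  hirr.connected_of_reflections hrefl hα hαmem hgen fun _ _ => And.intro

/-- Let `ρ : W → GL(V)` be a finite-dimensional irreducible
representation, with `s 1, …, s k ∈ W` acting as generalized reflections with reflection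
vectors `α i`, and `W` generated by the `s i`. Assume `s i · α j ≠ α j ↔ s j · α i ≠ α i`
for all `i, j`, and form the graph on `{1, …, k}` with edges `{i, j}` whenever
`s i · α j ≠ α j` (`i ≠ j`). Then this graph is connected. -/
theorem reflection_graph_connected
    [FiniteDimensional F V] (ρ : Representation F W V)
    {k : ℕ} (hk : 0 < k) (s : Fin k → W) (α : Fin k → V)
    (hrefl : ∀ i, IsReflection (ρ (s i)))
    (hα : ∀ i, α i ≠ 0)
    (hαmem : ∀ i, α i ∈ LinearMap.range (ρ (s i) - LinearMap.id))
    (hgen : Subgroup.closure (Set.range s) = ⊤)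
    (hirr : ρ.IsIrreducible')
    (hsym : ∀ i j, ρ (s i) (α j) ≠ α j ↔ ρ (s j) (α i) ≠ α i) :
    (SimpleGraph.mk (fun i j : Fin k => i ≠ j ∧ ρ (s i) (α j) ≠ α j)
      ⟨fun i j h => ⟨h.1.symm, (hsym i j).mp h.2⟩⟩
      ⟨fun i h => h.1 rfl⟩).Connected :=
  reflection_graph_connected_general ρ hk s α hrefl hα hαmem hgen hirr hsym
end

section
/- Let ρ: W → GL(V) be a finite-dimensional irreducible representation of a group W over a field F, and let s₁, …, s_k ∈ W be such that each s_i acts on V as a generalized reflection with reflection vector α_i, W is generated by {s₁, …, s_k}, and for all i, j, s_i · α_j ≠ α_j if and only if s_j · α_i ≠ α_i. Define a graph G on vertex set S = {1, …, k} with edges E = {{i, j} : s_i · α_j ≠ α_j}. Then there exists a subset I ⊆ S such that {α_i : i ∈ I} is a basis of V and the subgraph of G induced on I is connected. -/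
open Module ExteriorAlgebra

variable {F : Type*} [Field F] {V : Type*} [AddCommGroup V] [Module F V]
  {V₂ : Type*} [AddCommGroup V₂] [Module F V₂]

variable {W : Type*} [Group W]

/-!
Choose a set `I` of indices, maximal among those on which `α` is linearly independent and
the induced graph is connected, and let `U` be the span of `α '' I`. A generator `s i` with
`α i ∈ U` preserves `U`, since it moves every vector by a multiple of `α i`. If `α i ∉ U`,
maximality rules out any edge from `i` to `I`, so `s i` fixes `α '' I` pointwise and again
preserves `U`. Thus the nonzero subspace `U` is `W`-invariant, and `U = V` by irreducibility.
-/

namespace SimpleGraph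

variable {ι : Type*} (G : SimpleGraph ι)

theorem induce_singleton_connected (a : ι) : (G.induce {a}).Connected :=
  (Subgraph.singletonSubgraph_connected (G := G) (v := a)).induce_verts

variable {G}

theorem Connected.induce_insert {A : Set ι} (hA : (G.induce A).Connected) {a b : ι}
    (ha : a ∈ A) (hba : G.Adj b a) : (G.induce (insert b A)).Connected := by
  have h := G.induce_union_connected (G.induce_pair_connected_of_adj hba).preconnected
    hA.preconnected ⟨a, by simp, ha⟩
  rwa [Set.insert_union, Set.singleton_union, Set.insert_eq_of_mem ha] at h

theorem exists_maximal_linearIndepOn_induce_connected [Finite ι] {v : ι → V} {i₀ : ι}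
    (h₀ : v i₀ ≠ 0) :
    ∃ I, Maximal (fun I : Set ι => LinearIndepOn F v I ∧ (G.induce I).Connected) I :=
  Set.Finite.exists_maximal (Set.toFinite _)
    ⟨{i₀}, (linearIndepOn_singleton_iff F).2 h₀, G.induce_singleton_connected i₀⟩

theorem not_adj_of_maximal_linearIndepOn_induce_connected {v : ι → V} {I : Set ι}
    (hI : Maximal (fun I : Set ι => LinearIndepOn F v I ∧ (G.induce I).Connected) I)
    {i m : ι} (hi : v i ∉ Submodule.span F (v '' I)) (hm : m ∈ I) : ¬ G.Adj i m := by
  intro him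
  have hiI : i ∉ I := fun h => hi (Submodule.subset_span (Set.mem_image_of_mem v h))
  have hinsert := hI.2 ⟨(linearIndepOn_insert hiI).2 ⟨hI.1.1, hi⟩, hI.1.2.induce_insert hm him⟩
    (Set.subset_insert i I)
  exact hiI (hinsert (Set.mem_insert i I))

end SimpleGraph

theorem Submodule.eq_span_singleton_of_finrank_eq_one {p : Submodule F V}
    (hp : finrank F p = 1) {a : V} (ha : a ∈ p) (ha₀ : a ≠ 0) : p = span F {a} :=
  haveI := Module.finite_of_finrank_eq_succ hp
  (eq_of_le_of_finrank_le ((span_singleton_le_iff_mem a p).2 ha)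
    (by rw [hp, finrank_span_singleton ha₀])).symm

theorem Submodule.span_le_comap_span_of_forall_apply_eq {s : Set V} {f : V →ₗ[F] V}
    (hf : ∀ x ∈ s, f x = x) : span F s ≤ (span F s).comap f :=
  span_le.2 fun x hx => by
    simpa only [SetLike.mem_coe, mem_comap, hf x hx] using subset_span hx

theorem LinearMap.le_comap_of_range_sub_id_le {f : V →ₗ[F] V} {U : Submodule F V}
    (hf : range (f - LinearMap.id) ≤ U) : U ≤ U.comap f := fun x hx => by
  have hfx : f x - x ∈ U := hf ⟨x, by simp⟩
  simpa using U.add_mem hx hfx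

namespace Representation

variable (ρ : Representation F W V) (U : Submodule F V) [FiniteDimensional F U]

theorem map_eq_of_map_le {g : W} (hg : U.map (ρ g) ≤ U) : U.map (ρ g) = U :=
  Submodule.eq_of_le_of_finrank_eq hg
    (Submodule.equivMapOfInjective _ (ρ.apply_bijective g).1 U).finrank_eq.symm

def invtSubgroup : Subgroup W where
  carrier := {g | U ≤ U.comap (ρ g)}
  one_mem' := by simp [Module.End.one_eq_id]
  mul_mem' {a b} ha hb x hx := by
    simpa only [Submodule.mem_comap, map_mul, Module.End.mul_apply] using ha (hb hx)
  inv_mem' {g} hg x hx := by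
    rw [← ρ.map_eq_of_map_le U (Submodule.map_le_iff_le_comap.2 hg)] at hx
    obtain ⟨y, hy, rfl⟩ := hx
    simpa using hy

end Representation

theorem exists_basis_subset_induced_connected_general
    (ρ : Representation F W V)
    {k : ℕ} (hk : 0 < k) (s : Fin k → W) (α : Fin k → V)
    (hrefl : ∀ i, IsReflection (ρ (s i)))
    (hα : ∀ i, α i ≠ 0)
    (hαmem : ∀ i, α i ∈ LinearMap.range (ρ (s i) - LinearMap.id))
    (hgen : Subgroup.closure (Set.range s) = ⊤)
    (hirr : ρ.IsIrreducible')
    (hsym : ∀ i j, ρ (s i) (α j) ≠ α j ↔ ρ (s j) (α i) ≠ α i) :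
    ∃ I : Set (Fin k),
      LinearIndependent F (fun i : I => α ↑i) ∧
      Submodule.span F (α '' I) = ⊤ ∧
      ((SimpleGraph.mk (fun i j : Fin k => i ≠ j ∧ ρ (s i) (α j) ≠ α j)
        ⟨fun i j h => ⟨h.1.symm, (hsym i j).mp h.2⟩⟩
        ⟨fun i h => h.1 rfl⟩).induce I).Connected := by
  set G : SimpleGraph (Fin k) := SimpleGraph.mk (fun i j => i ≠ j ∧ ρ (s i) (α j) ≠ α j)
    ⟨fun i j h => ⟨h.1.symm, (hsym i j).mp h.2⟩⟩ ⟨fun i h => h.1 rfl⟩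
  obtain ⟨I, hI⟩ := G.exists_maximal_linearIndepOn_induce_connected (F := F) (hα ⟨0, hk⟩)
  set U := Submodule.span F (α '' I)
  have : FiniteDimensional F U := FiniteDimensional.span_of_finite F (Set.toFinite _)
  have hinvt : ∀ i, s i ∈ ρ.invtSubgroup U := fun i => by
    by_cases hiU : α i ∈ U
    · refine LinearMap.le_comap_of_range_sub_id_le ?_
      rw [Submodule.eq_span_singleton_of_finrank_eq_one (hrefl i).2 (hαmem i) (hα i)]
      exact (Submodule.span_singleton_le_iff_mem _ _).2 hiU
    · refine Submodule.span_le_comap_span_of_forall_apply_eq ?_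
      rintro _ ⟨m, hm, rfl⟩
      by_contra hfix
      exact G.not_adj_of_maximal_linearIndepOn_induce_connected hI hiU hm
        ⟨fun h => hiU (h ▸ Submodule.subset_span ⟨m, hm, rfl⟩), hfix⟩
  have hW : Subgroup.closure (Set.range s) ≤ ρ.invtSubgroup U :=
    (Subgroup.closure_le _).2 (Set.range_subset_iff.2 hinvt)
  obtain ⟨m, hm⟩ := hI.1.2.nonempty
  have hU : U ≠ ⊥ := fun h =>
    hα m <| (Submodule.mem_bot F).1 (h ▸ Submodule.subset_span ⟨m, hm, rfl⟩)
  have hUtop : U = ⊤ :=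
    (hirr.2 U fun w => hW (hgen ▸ Subgroup.mem_top w)).resolve_left hU
  exact ⟨I, hI.1.1, hUtop, hI.1.2⟩

/-- Let `ρ : W → GL(V)` be a finite-dimensional irreducible
representation, with `s 1, …, s k ∈ W` acting as generalized reflections with reflection
vectors `α i`, `W` generated by the `s i`, and `s i · α j ≠ α j ↔ s j · α i ≠ α i` for all
`i, j`. Form the graph `G` on `{1, …, k}` with edges `{i, j}` whenever `s i · α j ≠ α j`.
Then there is a subset `I ⊆ {1, …, k}` such that `{α i : i ∈ I}` is a basis of `V` and the
induced subgraph of `G` on `I` is connected. -/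
theorem exists_basis_subset_induced_connected
    [FiniteDimensional F V] (ρ : Representation F W V)
    {k : ℕ} (hk : 0 < k) (s : Fin k → W) (α : Fin k → V)
    (hrefl : ∀ i, IsReflection (ρ (s i)))
    (hα : ∀ i, α i ≠ 0)
    (hαmem : ∀ i, α i ∈ LinearMap.range (ρ (s i) - LinearMap.id))
    (hgen : Subgroup.closure (Set.range s) = ⊤)
    (hirr : ρ.IsIrreducible')
    (hsym : ∀ i j, ρ (s i) (α j) ≠ α j ↔ ρ (s j) (α i) ≠ α i) :
    ∃ I : Set (Fin k),
      LinearIndependent F (fun i : I => α ↑i) ∧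
      Submodule.span F (α '' I) = ⊤ ∧
      ((SimpleGraph.mk (fun i j : Fin k => i ≠ j ∧ ρ (s i) (α j) ≠ α j)
        ⟨fun i j h => ⟨h.1.symm, (hsym i j).mp h.2⟩⟩
        ⟨fun i h => h.1 rfl⟩).induce I).Connected :=
  exists_basis_subset_induced_connected_general ρ hk s α hrefl hα hαmem hgen hirr hsym
end

section
/- Let V be a finite-dimensional vector space over a field F and let H₁, …, H_k ⊆ V be linear subspaces. Regarding each ⋀^d H_i naturally as a subspace of ⋀^d V, one has ⋂_{1 ≤ i ≤ k} (⋀^d H_i) = ⋀^d (⋂_{1 ≤ i ≤ k} H_i) for every 0 ≤ d ≤ dim V. -/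
open Module ExteriorAlgebra

variable {F : Type*} [Field F] {V : Type*} [AddCommGroup V] [Module F V]
  {V₂ : Type*} [AddCommGroup V₂] [Module F V₂]

variable {W : Type*} [Group W]

/-!
Choose a complement `C` of `A ⊓ B` inside `A` and enlarge it to a complement `L` of `B`. The
projection `p` onto `B` along `L` fixes `B` pointwise and sends `A` into `A ⊓ B`. An element `x`
of `⋀^d A ∩ ⋀^d B` is then fixed by `⋀^d p` because it lies in `⋀^d B`, and is sent into
`⋀^d (A ⊓ B)` because it lies in `⋀^d A`. Finite intersections follow by induction.
-/

theorem Submodule.exists_projection_mapsTo_inf {K E : Type*} [DivisionRing K] [AddCommGroup E]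
    [Module K E] (A B : Submodule K E) :
    ∃ p : E →ₗ[K] E, (∀ x ∈ B, p x = x) ∧ ∀ x ∈ A, p x ∈ A ⊓ B := by
  obtain ⟨C, hC, hAC⟩ := IsModularLattice.exists_disjoint_and_sup_eq (inf_le_left : A ⊓ B ≤ A)
  have hCA : C ≤ A := hAC ▸ le_sup_right
  have hCB : Disjoint C B := by
    rw [disjoint_iff, ← inf_eq_left.2 hCA, inf_assoc]
    exact hC.symm.eq_bot
  obtain ⟨L, hCL, hLB⟩ := hCB.exists_isCompl
  refine ⟨B.projection L hLB.symm, fun x hx => projection_apply_of_mem_left _ hx, fun x hx => ?_⟩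
  rw [← hAC] at hx
  obtain ⟨y, hy, z, hz, rfl⟩ := mem_sup.1 hx
  rw [map_add, projection_apply_of_mem_left _ hy.2, projection_apply_of_mem_right _ (hCL hz),
    add_zero]
  exact hy

section extMap

variable {V₃ : Type*} [AddCommGroup V₃] [Module F V₃] (d : ℕ)

theorem extMap_id : extMap d (LinearMap.id : V →ₗ[F] V) = LinearMap.id := by
  ext x
  simp [ExteriorAlgebra.map_id]

theorem extMap_comp (f : V₂ →ₗ[F] V₃) (g : V →ₗ[F] V₂) :
    extMap d (f ∘ₗ g) = extMap d f ∘ₗ extMap d g := by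
  ext x
  simp [← ExteriorAlgebra.map_comp_map]

theorem range_extMap_le_range_extMap_subtype {f : V₂ →ₗ[F] V} {U : Submodule F V}
    (h : LinearMap.range f ≤ U) :
    LinearMap.range (extMap d f) ≤ LinearMap.range (extMap d U.subtype) := by
  rw [← LinearMap.subtype_comp_codRestrict (f := f) U fun x => h (LinearMap.mem_range_self f x),
    extMap_comp]
  exact LinearMap.range_comp_le_range _ _

theorem range_extMap_subtype_mono {U U' : Submodule F V} (h : U ≤ U') :
    LinearMap.range (extMap d U.subtype) ≤ LinearMap.range (extMap d U'.subtype) :=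
  range_extMap_le_range_extMap_subtype d (by rwa [Submodule.range_subtype])

theorem range_extMap_subtype_top :
    LinearMap.range (extMap d (⊤ : Submodule F V).subtype) = ⊤ := by
  refine eq_top_iff.2 ?_
  rw [← LinearMap.range_id, ← extMap_id]
  exact range_extMap_le_range_extMap_subtype d le_top

theorem range_extMap_subtype_inf (A B : Submodule F V) :
    LinearMap.range (extMap d A.subtype) ⊓ LinearMap.range (extMap d B.subtype) =
      LinearMap.range (extMap d (A ⊓ B).subtype) := by
  refine le_antisymm ?_ (le_inf (range_extMap_subtype_mono d inf_le_left)
    (range_extMap_subtype_mono d inf_le_right))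
  rintro - ⟨⟨a, rfl⟩, b, hba⟩
  obtain ⟨p, hpB, hpA⟩ := A.exists_projection_mapsTo_inf B
  have hpB' : p ∘ₗ B.subtype = B.subtype := LinearMap.ext fun x => hpB x x.2
  have hfix : extMap d p (extMap d A.subtype a) = extMap d A.subtype a := by
    rw [← hba, ← LinearMap.comp_apply, ← extMap_comp, hpB']
  rw [← hfix, ← LinearMap.comp_apply, ← extMap_comp]
  refine range_extMap_le_range_extMap_subtype d ?_ (LinearMap.mem_range_self _ a)
  rintro - ⟨x, rfl⟩
  exact hpA x x.2

theorem iInf_range_extMap_subtype_finset {ι : Type*} (s : Finset ι) (H : ι → Submodule F V) :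
    ⨅ i ∈ s, LinearMap.range (extMap d (H i).subtype) =
      LinearMap.range (extMap d (⨅ i ∈ s, H i).subtype) := by
  classical
  induction s using Finset.induction_on with
  | empty =>
    rw [show (⨅ i ∈ (∅ : Finset ι), H i) = ⊤ by simp, range_extMap_subtype_top]
    simp
  | insert i s _ ih => rw [Finset.iInf_insert, Finset.iInf_insert, ih, range_extMap_subtype_inf]

theorem iInf_range_extMap_subtype {ι : Type*} [Finite ι] (H : ι → Submodule F V) :
    ⨅ i, LinearMap.range (extMap d (H i).subtype) =
      LinearMap.range (extMap d (⨅ i, H i).subtype) := by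
  have := Fintype.ofFinite ι
  rw [show (⨅ i, H i) = ⨅ i ∈ Finset.univ, H i by simp, ← iInf_range_extMap_subtype_finset]
  simp

end extMap

theorem iInf_exteriorPower_eq_exteriorPower_iInf_general
    {k : ℕ} (H : Fin k → Submodule F V) :
    ∀ d : ℕ, d ≤ Module.finrank F V →
      (⨅ i : Fin k, LinearMap.range (extMap d (H i).subtype)) =
        LinearMap.range (extMap d (⨅ i : Fin k, H i).subtype) :=
  fun d _ => iInf_range_extMap_subtype d H

/-- Let `V` be a finite-dimensional vector space and `H 1, …, H k ⊆ V`
linear subspaces. Regarding each `⋀^d (H i)` naturally as a subspace of `⋀^d V` (the range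
of the map induced by the inclusion `H i ↪ V`), one has
`⋂_{1 ≤ i ≤ k} ⋀^d (H i) = ⋀^d (⋂_{1 ≤ i ≤ k} H i)` for every `0 ≤ d ≤ dim V`. -/
theorem iInf_exteriorPower_eq_exteriorPower_iInf
    [FiniteDimensional F V] {k : ℕ} (H : Fin k → Submodule F V) :
    ∀ d : ℕ, d ≤ Module.finrank F V →
      (⨅ i : Fin k, LinearMap.range (extMap d (H i).subtype)) =
        LinearMap.range (extMap d (⨅ i : Fin k, H i).subtype) :=
  iInf_exteriorPower_eq_exteriorPower_iInf_general H
end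

section
/- Let ρ: W → GL(V) be a finite-dimensional representation of a group W, and let s₁, …, s_k ∈ W be such that each s_i acts on V as a generalized reflection with reflection hyperplane H_i. Then for every 0 ≤ d ≤ dim V, the subspace {v ∈ ⋀^d V : s_i · v = v for all i = 1, …, k} equals ⋀^d (⋂_{1 ≤ i ≤ k} H_i), regarded naturally as a subspace of ⋀^d V. -/
open Module ExteriorAlgebra

variable {F : Type*} [Field F] {V : Type*} [AddCommGroup V] [Module F V]
  {V₂ : Type*} [AddCommGroup V₂] [Module F V₂]

variable {W : Type*} [Group W]

/-!
Write `⋀^d A` for a subspace `A ⊆ V` as the submodule power `(ι A)^d` of the exterior algebra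
of `V`. If `s` is a reflection with hyperplane `H` and `s e = c • e` with `c ≠ 1`, then
`V = H + F e`, so every `x ∈ ⋀^d V` is `y + e ∧ z` with `y ∈ ⋀^d H` and `z` in the subalgebra
generated by `H`. As `s` fixes `y` and `z` and scales `e` by `c`, `s x = x` forces `e ∧ z = 0`.
For several reflections one uses `⋀^d A ∩ ⋀^d B = ⋀^d (A ∩ B)`: a projection onto `A` that maps
`B` into `A ∩ B` fixes `⋀^d A` pointwise and maps `⋀^d B` into `⋀^d (A ∩ B)`.
-/

theorem LinearMap.mem_ker_sub_id_iff {R M : Type*} [Ring R] [AddCommGroup M] [Module R M]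
    {f : M →ₗ[R] M} {v : M} : v ∈ ker (f - id) ↔ f v = v := by
  rw [mem_ker, sub_apply, id_apply, sub_eq_zero]

section DivisionRing

variable {K : Type*} [DivisionRing K] {E : Type*} [AddCommGroup E] [Module K E]

theorem Submodule.exists_fixing_map_le_inf (A B : Submodule K E) :
    ∃ p : E →ₗ[K] E, (∀ a ∈ A, p a = a) ∧ B.map p ≤ A ⊓ B := by
  obtain ⟨B', hdisj, hsup⟩ :=
    IsModularLattice.exists_disjoint_and_sup_eq (inf_le_right : A ⊓ B ≤ B)
  have hB'B : B' ≤ B := hsup ▸ le_sup_right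
  have hB'A : Disjoint B' A :=
    disjoint_iff_inf_le.2 fun x hx => hdisj.le_bot ⟨⟨hx.2, hB'B hx.1⟩, hx.1⟩
  obtain ⟨C, hB'C, hCA⟩ := hB'A.exists_isCompl
  refine ⟨A.projection C hCA.symm, fun a ha => projection_apply_of_mem_left _ ha, ?_⟩
  rintro - ⟨b, hb, rfl⟩
  rw [← hsup] at hb
  obtain ⟨m, hm, b', hb', rfl⟩ := mem_sup.1 hb
  rw [map_add, projection_apply_of_mem_left _ hm.1, projection_apply_of_mem_right _ (hB'C hb'),
    add_zero]
  exact hm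

end DivisionRing

theorem IsReflection.exists_eigenvector {s : V →ₗ[F] V} (hs : IsReflection s) :
    ∃ c : F, ∃ e : V, c ≠ 1 ∧ s e = c • e ∧
      ∀ v : V, ∃ t : F, v - t • e ∈ LinearMap.ker (s - LinearMap.id) := by
  obtain ⟨c, hc, hne⟩ : ∃ c : F, c ≠ 1 ∧ Module.End.eigenspace s c ≠ ⊥ := by
    by_contra! h
    have hker : LinearMap.ker (s - LinearMap.id) = ⊤ := by
      refine eq_top_iff.2 (hs.1 ▸ iSup_le fun μ => ?_)
      rcases eq_or_ne μ 1 with rfl | hμ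
      · intro x hx
        rw [LinearMap.mem_ker_sub_id_iff, Module.End.mem_eigenspace_iff.1 hx, one_smul]
      · rw [h μ hμ]
        exact bot_le
    have h2 := hs.2
    rw [LinearMap.ker_eq_top.1 hker, LinearMap.range_zero, finrank_bot] at h2
    exact zero_ne_one h2
  obtain ⟨e, he, he0⟩ := Submodule.exists_mem_ne_zero_of_ne_bot hne
  have hse : s e = c • e := Module.End.mem_eigenspace_iff.1 he
  have hw : (s - LinearMap.id : V →ₗ[F] V) e ≠ 0 := by
    have := smul_ne_zero (sub_ne_zero.2 hc) he0
    rwa [sub_smul, one_smul, ← hse] at this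
  have hspan := (finrank_eq_one_iff_of_nonzero' (⟨_, LinearMap.mem_range_self _ e⟩ :
    LinearMap.range (s - LinearMap.id)) (by simpa using hw)).1 hs.2
  refine ⟨c, e, hc, hse, fun v => ?_⟩
  obtain ⟨t, ht⟩ := hspan ⟨_, LinearMap.mem_range_self _ v⟩
  refine ⟨t, ?_⟩
  rw [LinearMap.mem_ker, map_sub, map_smul, sub_eq_zero]
  exact (congrArg Subtype.val ht).symm

namespace ExteriorAlgebra

section CommRing

variable {R M N : Type*} [CommRing R] [AddCommGroup M] [Module R M] [AddCommGroup N] [Module R N]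

theorem map_pow_map_ι (f : M →ₗ[R] N) (A : Submodule R M) (d : ℕ) :
    ((A.map (ι R)) ^ d).map (map f).toLinearMap = ((A.map f).map (ι R)) ^ d := by
  rw [Submodule.map_pow, ← Submodule.map_comp, map_comp_ι, Submodule.map_comp]

theorem pow_map_ι_le_adjoin (A : Submodule R M) (d : ℕ) :
    (A.map (ι R)) ^ d ≤ Subalgebra.toSubmodule (Algebra.adjoin R (A.map (ι R) : Set _)) := by
  intro x hx
  exact Submodule.pow_induction_on_left (C := (· ∈ Algebra.adjoin R _)) _
    (Subalgebra.algebraMap_mem _)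
    (fun _ _ => add_mem) (fun _ hm _ => mul_mem (Algebra.subset_adjoin hm)) hx

theorem map_eq_self_of_mem_adjoin {f : M →ₗ[R] M} {A : Submodule R M} (hf : ∀ a ∈ A, f a = a)
    {x : ExteriorAlgebra R M} (hx : x ∈ Algebra.adjoin R (A.map (ι R) : Set _)) :
    map f x = x :=
  AlgHom.adjoin_le_equalizer (map f) (AlgHom.id R _)
    (by rintro - ⟨a, ha, rfl⟩; simp [hf a ha]) hx

theorem map_eq_self_of_mem_pow_map_ι {f : M →ₗ[R] M} {A : Submodule R M} (hf : ∀ a ∈ A, f a = a)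
    {d : ℕ} {x : ExteriorAlgebra R M} (hx : x ∈ (A.map (ι R)) ^ d) : map f x = x :=
  map_eq_self_of_mem_adjoin hf (pow_map_ι_le_adjoin A d hx)

theorem exists_eq_add_ι_mul_of_mem_exteriorPower {H : Submodule R M} {e : M}
    (hHe : ∀ v : M, ∃ t : R, v - t • e ∈ H) {d : ℕ} {x : ExteriorAlgebra R M}
    (hx : x ∈ ⋀[R]^d M) :
    ∃ y ∈ (H.map (ι R)) ^ d, ∃ z ∈ Algebra.adjoin R (H.map (ι R) : Set _),
      x = y + ι R e * z := by
  induction hx using Submodule.pow_induction_on_left' with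
  | algebraMap r => exact ⟨_, Submodule.algebraMap_mem r, 0, zero_mem _, by simp⟩
  | add _ _ _ _ _ hx hx' =>
    obtain ⟨y, hy, z, hz, rfl⟩ := hx
    obtain ⟨y', hy', z', hz', rfl⟩ := hx'
    exact ⟨y + y', add_mem hy hy', z + z', add_mem hz hz', by rw [mul_add]; abel⟩
  | mem_mul m hm i _ _ hx =>
    obtain ⟨y, hy, z, hz, rfl⟩ := hx
    obtain ⟨v, rfl⟩ := hm
    obtain ⟨t, hvt⟩ := hHe v
    set h := v - t • e
    have hιh : ι R h ∈ H.map (ι R) := Submodule.mem_map_of_mem hvt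
    have hv : ι R v = ι R h + t • ι R e := by simp [h]
    have hanti : ι R h * ι R e = -(ι R e * ι R h) :=
      eq_neg_of_add_eq_zero_left (ι_add_mul_swap h e)
    refine ⟨ι R h * y, ?_, t • y - ι R h * z, ?_, ?_⟩
    · rw [pow_succ']
      exact Submodule.mul_mem_mul hιh hy
    · exact sub_mem (Subalgebra.smul_mem _ (pow_map_ι_le_adjoin H i hy) t)
        (mul_mem (Algebra.subset_adjoin hιh) hz)
    · rw [hv, add_mul, mul_add, mul_add, ← mul_assoc, hanti, smul_mul_assoc, smul_mul_assoc,
        ← mul_assoc (ι R e), ι_sq_zero, zero_mul, smul_zero, mul_sub, mul_smul_comm, neg_mul,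
        mul_assoc]
      abel

end CommRing

theorem pow_map_ι_inf (A B : Submodule F V) (d : ℕ) :
    (A.map (ι F)) ^ d ⊓ (B.map (ι F)) ^ d = ((A ⊓ B).map (ι F)) ^ d := by
  refine le_antisymm ?_ (le_inf (pow_le_pow_left' (Submodule.map_mono inf_le_left) d)
    (pow_le_pow_left' (Submodule.map_mono inf_le_right) d))
  rintro x ⟨hxA, hxB⟩
  obtain ⟨p, hpA, hpB⟩ := Submodule.exists_fixing_map_le_inf A B
  rw [← map_eq_self_of_mem_pow_map_ι hpA hxA]
  refine pow_le_pow_left' (Submodule.map_mono hpB) d ?_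
  rw [← map_pow_map_ι]
  exact Submodule.mem_map_of_mem hxB

theorem exteriorPower_inf_iInf_pow_map_ι {I : Type*} [Fintype I] (A : I → Submodule F V)
    (d : ℕ) : ⋀[F]^d V ⊓ ⨅ i, ((A i).map (ι F)) ^ d = ((⨅ i, A i).map (ι F)) ^ d := by
  classical
  have key : ∀ S : Finset I,
      ⋀[F]^d V ⊓ ⨅ i ∈ S, ((A i).map (ι F)) ^ d = ((⨅ i ∈ S, A i).map (ι F)) ^ d := by
    intro S
    induction S using Finset.induction_on with
    | empty => simp [Submodule.map_top]
    | insert a S _ ih =>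
      rw [Finset.iInf_insert, Finset.iInf_insert, inf_left_comm, ih, pow_map_ι_inf]
  simpa using key Finset.univ

end ExteriorAlgebra

theorem IsReflection.mem_pow_map_ι_ker_of_map_eq_self {s : V →ₗ[F] V} (hs : IsReflection s)
    {d : ℕ} {x : ExteriorAlgebra F V} (hx : x ∈ ⋀[F]^d V) (hfix : map s x = x) :
    x ∈ ((LinearMap.ker (s - LinearMap.id)).map (ι F)) ^ d := by
  obtain ⟨c, e, hc, hse, hHe⟩ := hs.exists_eigenvector
  have hfixH (h) (hh : h ∈ LinearMap.ker (s - LinearMap.id)) : s h = h :=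
    LinearMap.mem_ker_sub_id_iff.1 hh
  obtain ⟨y, hy, z, hz, rfl⟩ := exists_eq_add_ι_mul_of_mem_exteriorPower hHe hx
  have hmap : map s (y + ι F e * z) = y + c • (ι F e * z) := by
    rw [map_add, map_mul, map_eq_self_of_mem_pow_map_ι hfixH hy,
      map_eq_self_of_mem_adjoin hfixH hz, map_apply_ι, hse, map_smul, smul_mul_assoc]
  have hez : ι F e * z = 0 := by
    rw [hmap, add_right_inj] at hfix
    have h0 : (c - 1) • (ι F e * z) = 0 := by rw [sub_smul, one_smul, hfix, sub_self]
    exact (smul_eq_zero.1 h0).resolve_left (sub_ne_zero.2 hc)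
  rwa [hez, add_zero]

theorem mem_range_extMap_subtype_iff (A : Submodule F V) {d : ℕ} (x : ⋀[F]^d V) :
    x ∈ LinearMap.range (extMap d A.subtype) ↔
      (x : ExteriorAlgebra F V) ∈ (A.map (ι F)) ^ d := by
  have himage : (⋀[F]^d A).map (map A.subtype).toLinearMap = (A.map (ι F)) ^ d := by
    rw [exteriorPower, LinearMap.range_eq_map, map_pow_map_ι, Submodule.map_top,
      Submodule.range_subtype]
  rw [← himage]
  constructor
  · rintro ⟨z, rfl⟩
    exact ⟨z, z.2, rfl⟩
  · rintro ⟨z, hz, hzx⟩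
    exact ⟨⟨z, hz⟩, Subtype.ext hzx⟩

theorem mem_eigenspace_extRep_one_iff (ρ : Representation F W V) {d : ℕ} (w : W)
    (x : ⋀[F]^d V) :
    x ∈ Module.End.eigenspace (extRep ρ d w) 1 ↔ map (ρ w) (x : ExteriorAlgebra F V) = x := by
  rw [Module.End.mem_eigenspace_iff, one_smul, Subtype.ext_iff]
  rfl

theorem fixed_subspace_eq_exteriorPower_iInf_hyperplanes_general
    (ρ : Representation F W V)
    {k : ℕ} (s : Fin k → W)
    (hrefl : ∀ i, IsReflection (ρ (s i))) :
    ∀ d : ℕ, d ≤ Module.finrank F V →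
      (⨅ i : Fin k, Module.End.eigenspace ((extRep ρ d) (s i)) 1) =
        LinearMap.range
          (extMap d (⨅ i : Fin k, LinearMap.ker (ρ (s i) - LinearMap.id)).subtype) := by
  intro d _
  ext x
  simp only [Submodule.mem_iInf, mem_eigenspace_extRep_one_iff, mem_range_extMap_subtype_iff,
    ← exteriorPower_inf_iInf_pow_map_ι, Submodule.mem_inf, x.2, true_and]
  constructor
  · intro hfix i
    exact (hrefl i).mem_pow_map_ι_ker_of_map_eq_self x.2 (hfix i)
  · intro hx i
    exact map_eq_self_of_mem_pow_map_ι (fun _ => LinearMap.mem_ker_sub_id_iff.1) (hx i)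

/-- Let `ρ : W → GL(V)` be a finite-dimensional representation and let
`s 1, …, s k ∈ W` act on `V` as generalized reflections with reflection hyperplanes
`H i = ker (ρ (s i) - id)`. Then for every `0 ≤ d ≤ dim V`, the subspace of `⋀^d V` fixed
pointwise by all the `s i` equals `⋀^d (⋂_{1 ≤ i ≤ k} H i)`, regarded naturally as a
subspace of `⋀^d V`. -/
theorem fixed_subspace_eq_exteriorPower_iInf_hyperplanes
    [FiniteDimensional F V] (ρ : Representation F W V)
    {k : ℕ} (s : Fin k → W)
    (hrefl : ∀ i, IsReflection (ρ (s i))) :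
    ∀ d : ℕ, d ≤ Module.finrank F V →
      (⨅ i : Fin k, Module.End.eigenspace ((extRep ρ d) (s i)) 1) =
        LinearMap.range
          (extMap d (⨅ i : Fin k, LinearMap.ker (ρ (s i) - LinearMap.id)).subtype) :=
  fixed_subspace_eq_exteriorPower_iInf_hyperplanes_general ρ s hrefl
end
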